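/- arXiv:1211.4092 — 7 statements merged into one kernel-verified Lean document; each statement's English description precedes it below -/
import Mathlib

section
/- Let Σ be a finite alphabet, ∼ an equivalence relation on Σ, and G ⊆ Σ* a finite set of guides. If L is a regular language over Σ, then the language L_G = { v ∈ Σ* | ∃ u ∈ L : u ⇒* v } is regular. -/
/-!
Because `∼` is an equivalence, every word reachable from `u` is `∼ u`, so whether a guide may be
written at a position depends only on `u`. Hence `u ⇒* v` iff `v` arises from `u` by writing a
list of `u`-admissible guides one over the other, each write occurring only once. Reading `u` and
`v` in parallel, a finite automaton guesses at each position the stack of writes covering it,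
most recent first, each recorded as a guide with an offset into it; consecutive stacks must list
the continuing writes in the same order. Conversely, stacks that agree locally can be merged into
one global order of writes. So the pairs `(u, v)` with `u ⇒* v` form a regular language over
`Σ × Σ`, and `L_G` is its image under the second projection after intersecting with the
preimage of `L` under the first.
-/

/-- A guided rewrite step: some substring `y` of `u` that is elementwise
adjustment-equivalent to a guide `g ∈ G` is replaced by `g`. -/
def GuidedStep {α : Type} (sim : α → α → Prop) (G : Set (List α)) (u v : List α) : Prop :=
  ∃ g ∈ G, ∃ x y z : List α, u = x ++ y ++ z ∧ v = x ++ g ++ z ∧ List.Forall₂ sim y g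

open List

theorem List.forall₂_iff_getElem? {β γ : Type*} {R : β → γ → Prop} {l₁ : List β}
    {l₂ : List γ} : Forall₂ R l₁ l₂ ↔ ∀ i : ℕ, Option.Rel R l₁[i]? l₂[i]? := by
  induction l₁ generalizing l₂ with
  | nil =>
    cases l₂
    · simp
    · simpa using ⟨0, by simp⟩
  | cons a l₁ ih =>
    cases l₂
    · simpa using ⟨0, by simp⟩
    · rw [forall₂_cons, ih]
      conv_rhs => rw [← Nat.and_forall_add_one]
      simp

theorem Equivalence.forall₂ {β : Type*} {r : β → β → Prop} (h : Equivalence r) :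
    Equivalence (Forall₂ r) where
  refl l := forall₂_same.2 fun x _ => h.refl x
  symm hab := Forall₂.flip (hab.imp fun _ _ => h.symm)
  trans {_ _ l₃} hab hbc := by
    induction hab generalizing l₃ with
    | nil => exact hbc
    | cons hxy _ ih => cases hbc with
      | cons hyz hl => exact .cons (h.trans hxy hyz) (ih hl)

theorem List.filter_eq_of_sublist {β : Type*} {p : β → Bool} {l c : List β} (hl : l.Nodup)
    (hc : c <+ l) (h : ∀ x ∈ l, p x ↔ x ∈ c) : l.filter p = c := by
  have hcp : c.filter p = c := filter_eq_self.2 fun x hx => (h x (hc.subset hx)).2 hx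
  refine (hcp ▸ hc.filter p).eq_of_length_le ?_ |>.symm
  refine ((hl.filter p).subperm fun x hx => ?_).length_le
  rw [mem_filter] at hx
  exact (h x hx.1).1 hx.2

theorem List.exists_merge {β : Type*} {p : β → Bool} {L c : List β} (hL : L.Nodup)
    (hc : c.Nodup) (hp : ∀ x ∈ c, p x ↔ x ∈ L) (h : c.filter p <+ L) :
    ∃ M, L <+ M ∧ c <+ M ∧ M.Nodup ∧ ∀ x ∈ M, x ∈ L ∨ x ∈ c := by
  induction c generalizing L with
  | nil => exact ⟨L, .refl L, nil_sublist L, hL, fun x hx => .inl hx⟩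
  | cons a c ih =>
    obtain ⟨hac, hc⟩ := nodup_cons.1 hc
    rw [forall_mem_cons] at hp
    by_cases ha : a ∈ L
    · rw [filter_cons_of_pos (hp.1.2 ha), cons_sublist_iff] at h
      obtain ⟨L₁, L₂, rfl, haL₁, hcL₂⟩ := h
      have hmemL₂ : ∀ x ∈ c, x ∈ L₁ ++ L₂ → x ∈ L₂ := fun x hx hxL =>
        hcL₂.subset (mem_filter.2 ⟨hx, (hp.2 x hx).2 hxL⟩)
      obtain ⟨hL₁, hL₂, hdisj⟩ := nodup_append.1 hL
      obtain ⟨M, hLM, hcM, hM, hmem⟩ := ih hL₂ hc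
        (fun x hx => (hp.2 x hx).trans ⟨hmemL₂ x hx, mem_append_right L₁⟩) hcL₂
      refine ⟨L₁ ++ M, (Sublist.refl L₁).append hLM,
        (singleton_sublist.2 haL₁).append hcM, nodup_append.2 ⟨hL₁, hM, ?_⟩, ?_⟩
      · rintro x hx₁ _ hy rfl
        rcases hmem x hy with hx₂ | hxc
        · exact hdisj x hx₁ x hx₂ rfl
        · exact hdisj x hx₁ x (hmemL₂ x hxc (mem_append_left _ hx₁)) rfl
      · intro x hx
        rcases mem_append.1 hx with hx | hx
        · exact .inl (mem_append_left _ hx)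
        · exact (hmem x hx).imp (mem_append_right _) (mem_cons_of_mem a)
    · rw [filter_cons_of_neg (mt hp.1.1 ha)] at h
      obtain ⟨M, hLM, hcM, hM, hmem⟩ := ih hL hc hp.2 h
      refine ⟨a :: M, hLM.cons a, hcM.cons_cons a, nodup_cons.2 ⟨fun haM => ?_, hM⟩, ?_⟩
      · exact (hmem a haM).elim ha hac
      · rintro x (_ | ⟨_, hx⟩)
        · exact .inr mem_cons_self
        · exact (hmem x hx).imp_right (mem_cons_of_mem a)

theorem Set.Finite.setOf_nodup {β : Type*} {S : Set β} (hS : S.Finite) :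
    {l : List β | l.Nodup ∧ ∀ x ∈ l, x ∈ S}.Finite := by
  classical
  have := hS.fintype
  refine (Set.finite_univ (α := {l : List S // l.Nodup}) |>.image fun l => l.1.map (↑)).subset ?_
  rintro l ⟨hl, hlS⟩
  obtain ⟨l', rfl⟩ : l ∈ Set.range (List.map ((↑) : S → β)) := by
    rwa [Set.range_list_map_coe]
  exact ⟨⟨l', hl.of_map _⟩, trivial, rfl⟩

namespace NFA

variable {α σ : Type*}

theorem mem_evalFrom_iff_exists_run (M : NFA α σ) (S : Set σ) (x : List α) (t : σ) :
    t ∈ M.evalFrom S x ↔ ∃ f : ℕ → σ, f 0 ∈ S ∧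
      (∀ i (h : i < x.length), f (i + 1) ∈ M.step (f i) x[i]) ∧ f x.length = t := by
  induction x generalizing S with
  | nil => exact ⟨fun h => ⟨fun _ => t, h, nofun, rfl⟩, fun ⟨f, h0, _, hf⟩ => hf ▸ h0⟩
  | cons a x ih =>
    rw [evalFrom_cons, ih]
    constructor
    · rintro ⟨f, hf0, hstep, rfl⟩
      obtain ⟨s, hs, hfs⟩ := mem_stepSet.1 hf0
      refine ⟨fun | 0 => s | i + 1 => f i, hs, ?_, rfl⟩
      rintro (_ | i) h
      · exact hfs
      · exact hstep i (by simpa using h)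
    · rintro ⟨f, hf0, hstep, rfl⟩
      exact ⟨fun i => f (i + 1), mem_stepSet.2 ⟨f 0, hf0, hstep 0 (by simp)⟩,
        fun i h => hstep (i + 1) (by simpa using h), rfl⟩

theorem mem_accepts_iff_exists_run (M : NFA α σ) (x : List α) :
    x ∈ M.accepts ↔ ∃ f : ℕ → σ, f 0 ∈ M.start ∧
      (∀ i (h : i < x.length), f (i + 1) ∈ M.step (f i) x[i]) ∧ f x.length ∈ M.accept := by
  simp only [mem_accepts, mem_evalFrom_iff_exists_run]
  constructor
  · rintro ⟨_, hacc, f, h0, hstep, rfl⟩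
    exact ⟨f, h0, hstep, hacc⟩
  · rintro ⟨f, h0, hstep, hacc⟩
    exact ⟨_, hacc, f, h0, hstep, rfl⟩

end NFA

theorem NFA.isRegular_accepts {α σ : Type} [Finite σ] (M : NFA α σ) : M.accepts.IsRegular :=
  ⟨Set σ, Fintype.ofFinite _, M.toDFA, M.toDFA_correct⟩

namespace Language

variable {α β : Type}

theorem IsRegular.preimage_map {L : Language α} (h : L.IsRegular) (f : β → α) :
    IsRegular (List.map f ⁻¹' L : Language β) := by
  obtain ⟨σ, _, M, rfl⟩ := h
  exact ⟨σ, inferInstance, M.comap f, M.accepts_comap f⟩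

theorem IsRegular.map {L : Language α} (h : L.IsRegular) (f : α → β) :
    (map f L).IsRegular := by
  obtain ⟨σ, _, M, rfl⟩ := h
  let N : NFA β σ :=
    { step := fun s b => {t | ∃ a, f a = b ∧ t = M.step s a}
      start := {M.start}
      accept := M.accept }
  have hN : ∀ (x : List β) (s t : σ),
      t ∈ N.evalFrom {s} x ↔ ∃ y : List α, y.map f = x ∧ M.evalFrom s y = t := by
    intro x
    induction x with
    | nil => simp [eq_comm]
    | cons b x ih =>
      intro s t
      simp only [NFA.evalFrom_cons, NFA.stepSet_singleton, NFA.mem_evalFrom_iff_exists, ih,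
        List.map_eq_cons_iff]
      constructor
      · rintro ⟨_, ⟨a, rfl, rfl⟩, y, rfl, rfl⟩
        exact ⟨a :: y, ⟨a, y, rfl, rfl, rfl⟩, rfl⟩
      · rintro ⟨_, ⟨a, y, rfl, rfl, rfl⟩, rfl⟩
        exact ⟨_, ⟨a, rfl, rfl⟩, y, rfl, rfl⟩
  have hNM : N.accepts = Language.map f M.accepts := by
    ext x
    rw [NFA.mem_accepts]
    change _ ↔ ∃ y, _
    simp only [show N.start = {M.start} from rfl, hN]
    constructor
    · rintro ⟨_, hacc, y, rfl, rfl⟩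
      exact ⟨y, hacc, rfl⟩
    · rintro ⟨y, hacc, rfl⟩
      exact ⟨_, hacc, y, rfl, rfl⟩
  exact hNM ▸ N.isRegular_accepts

end Language

namespace GuidedRewriting

variable {α : Type} {sim : α → α → Prop} {G : Set (List α)}

/-! A write `(g, p)` puts the word `g` at position `p`. A stack entry `(g, k)` at position `i`
says that `i` carries the `k`-th letter of such a write, which therefore starts at `i - k`;
`flipAt i` converts in both directions. -/

def Covers (w : List α × ℕ) (i : ℕ) : Prop := w.2 ≤ i ∧ i < w.2 + w.1.length

instance (w : List α × ℕ) (i : ℕ) : Decidable (Covers w i) :=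
  inferInstanceAs (Decidable (_ ∧ _))

def write (w : List α × ℕ) (u : List α) : List α :=
  u.take w.2 ++ w.1 ++ u.drop (w.2 + w.1.length)

def overlay (ws : List (List α × ℕ)) (u : List α) : List α := ws.foldr write u

def segment (u : List α) (w : List α × ℕ) : List α := (u.drop w.2).take w.1.length

variable (sim G) in
def Admissible (u : List α) (w : List α × ℕ) : Prop :=
  w.1 ∈ G ∧ w.2 + w.1.length ≤ u.length ∧ Forall₂ sim (segment u w) w.1

def flipAt (i : ℕ) (x : List α × ℕ) : List α × ℕ := (x.1, i - x.2)

def stackAt (ws : List (List α × ℕ)) (i : ℕ) : List (List α × ℕ) :=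
  (ws.filter (Covers · i)).map (flipAt i)

def topLetter (s : List (List α × ℕ)) : Option α := s.head?.bind fun e => e.1[e.2]?

theorem getElem?_segment (u : List α) (w : List α × ℕ) (d : ℕ) :
    (segment u w)[d]? = if d < w.1.length then u[w.2 + d]? else none := by
  simp [segment, getElem?_take, getElem?_drop]

theorem admissible_iff {u : List α} {w : List α × ℕ} :
    Admissible sim G u w ↔ w.1 ∈ G ∧ w.2 + w.1.length ≤ u.length ∧
      ∀ d < w.1.length, Option.Rel sim u[w.2 + d]? w.1[d]? := by
  refine and_congr_right' (and_congr_right fun _ => ?_)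
  rw [forall₂_iff_getElem?]
  refine forall_congr' fun d => ?_
  rw [getElem?_segment]
  split_ifs with hd <;> simp [hd]

theorem Admissible.rel_getElem? {u : List α} {w : List α × ℕ} (h : Admissible sim G u w)
    {i : ℕ} (hi : Covers w i) : Option.Rel sim u[i]? w.1[i - w.2]? := by
  have := (admissible_iff.1 h).2.2 (i - w.2) (by grind [Covers])
  rwa [Nat.add_sub_cancel' hi.1] at this

theorem Admissible.of_forall₂ (hsim : Equivalence sim) {u u' : List α} {w : List α × ℕ}
    (h : Admissible sim G u w) (huu' : Forall₂ sim u u') : Admissible sim G u' w := by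
  obtain ⟨hg, hfit, hseg⟩ := h
  refine ⟨hg, huu'.length_eq ▸ hfit, hsim.forall₂.trans (hsim.forall₂.symm ?_) hseg⟩
  exact forall₂_take _ (forall₂_drop _ huu')

theorem take_append_segment_append_drop (u : List α) (w : List α × ℕ) :
    u.take w.2 ++ segment u w ++ u.drop (w.2 + w.1.length) = u := by
  rw [segment, append_assoc, ← drop_drop, take_append_drop, take_append_drop]

theorem getElem?_write {w : List α × ℕ} {u : List α} (h : w.2 + w.1.length ≤ u.length)
    (i : ℕ) : (write w u)[i]? = if Covers w i then w.1[i - w.2]? else u[i]? := by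
  simp only [write, Covers, getElem?_append, length_append, length_take,
    Nat.min_eq_left (show w.2 ≤ u.length by omega), getElem?_take, getElem?_drop]
  by_cases h₁ : i < w.2
  · simp [h₁, show i < w.2 + w.1.length by omega, show ¬ w.2 ≤ i by omega]
  by_cases h₂ : i < w.2 + w.1.length
  · simp [h₁, h₂, show w.2 ≤ i by omega]
  · simp [h₂, show w.2 + w.1.length + (i - (w.2 + w.1.length)) = i by omega]

theorem length_write {w : List α × ℕ} {u : List α} (h : w.2 + w.1.length ≤ u.length) :
    (write w u).length = u.length := by
  simp only [write, length_append, length_take, length_drop]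
  omega

theorem forall₂_write (hsim : Equivalence sim) {u : List α} {w : List α × ℕ}
    (h : Admissible sim G u w) : Forall₂ sim u (write w u) := by
  conv_lhs => rw [← take_append_segment_append_drop u w]
  exact rel_append (rel_append (hsim.forall₂.refl _) h.2.2) (hsim.forall₂.refl _)

theorem guidedStep_iff_exists_write {u v : List α} :
    GuidedStep sim G u v ↔ ∃ w, Admissible sim G u w ∧ v = write w u := by
  constructor
  · rintro ⟨g, hg, x, y, z, rfl, rfl, hyg⟩
    have hlen := hyg.length_eq
    refine ⟨(g, x.length), ⟨hg, by simp [hlen], ?_⟩, ?_⟩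
    · simpa [segment, ← hlen] using hyg
    · simp [write, ← hlen]
  · rintro ⟨w, ⟨hg, -, hseg⟩, rfl⟩
    exact ⟨w.1, hg, u.take w.2, segment u w, u.drop (w.2 + w.1.length),
      (take_append_segment_append_drop u w).symm, rfl, hseg⟩

theorem forall₂_of_reflTransGen (hsim : Equivalence sim) {u v : List α}
    (h : Relation.ReflTransGen (GuidedStep sim G) u v) : Forall₂ sim u v := by
  induction h with
  | refl => exact hsim.forall₂.refl u
  | tail _ hstep ih =>
    obtain ⟨w, hw, rfl⟩ := guidedStep_iff_exists_write.1 hstep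
    exact hsim.forall₂.trans ih (forall₂_write hsim hw)

theorem flipAt_flipAt {i : ℕ} {x : List α × ℕ} (h : x.2 ≤ i) : flipAt i (flipAt i x) = x :=
  Prod.ext rfl (Nat.sub_sub_self h)

theorem mem_stackAt {ws : List (List α × ℕ)} {i : ℕ} {e : List α × ℕ} :
    e ∈ stackAt ws i ↔ ∃ w ∈ ws, Covers w i ∧ flipAt i w = e := by
  simp [stackAt, and_assoc]

theorem stackAt_cons (w : List α × ℕ) (ws : List (List α × ℕ)) (i : ℕ) :
    stackAt (w :: ws) i = if Covers w i then flipAt i w :: stackAt ws i else stackAt ws i := by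
  by_cases h : Covers w i <;> simp [stackAt, h]

theorem length_overlay {ws : List (List α × ℕ)} {u : List α}
    (h : ∀ w ∈ ws, w.2 + w.1.length ≤ u.length) : (overlay ws u).length = u.length := by
  induction ws with
  | nil => rfl
  | cons w ws ih =>
    rw [forall_mem_cons] at h
    rw [overlay, foldr_cons, ← overlay, length_write (by rw [ih h.2]; exact h.1), ih h.2]

theorem getElem?_overlay {ws : List (List α × ℕ)} {u : List α}
    (h : ∀ w ∈ ws, w.2 + w.1.length ≤ u.length) (i : ℕ) :
    (overlay ws u)[i]? = (topLetter (stackAt ws i)).or u[i]? := by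
  induction ws with
  | nil => simp [overlay, stackAt, topLetter]
  | cons w ws ih =>
    rw [forall_mem_cons] at h
    rw [overlay, foldr_cons, ← overlay, getElem?_write (by rw [length_overlay h.2]; exact h.1),
      ih h.2, stackAt_cons]
    split_ifs with hi
    · simp [topLetter, flipAt,
        getElem?_eq_getElem (show i - w.2 < w.1.length by grind [Covers])]
    · rfl

theorem write_overlay_erase [DecidableEq α] {w : List α × ℕ} {ws : List (List α × ℕ)}
    {u : List α} (hw : w.2 + w.1.length ≤ u.length)
    (h : ∀ w ∈ ws, w.2 + w.1.length ≤ u.length) :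
    write w (overlay (ws.erase w) u) = write w (overlay ws u) := by
  have h' : ∀ w' ∈ ws.erase w, w'.2 + w'.1.length ≤ u.length :=
    fun w' hw' => h w' (erase_subset hw')
  refine ext_getElem? fun i => ?_
  rw [getElem?_write (by rwa [length_overlay h']), getElem?_write (by rwa [length_overlay h])]
  split_ifs with hi
  · rfl
  · rw [getElem?_overlay h', getElem?_overlay h, stackAt, stackAt, ← erase_filter,
      erase_of_not_mem (by simp [hi])]

theorem reflTransGen_iff_exists_overlay (hsim : Equivalence sim) {u v : List α} :
    Relation.ReflTransGen (GuidedStep sim G) u v ↔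
      ∃ ws, ws.Nodup ∧ (∀ w ∈ ws, Admissible sim G u w) ∧ v = overlay ws u := by
  classical
  constructor
  · intro h
    induction h with
    | refl => exact ⟨[], nodup_nil, by simp, rfl⟩
    | tail hreach hstep ih =>
      obtain ⟨ws, hnd, hws, rfl⟩ := ih
      obtain ⟨w, hw, rfl⟩ := guidedStep_iff_exists_write.1 hstep
      have hwu := hw.of_forall₂ hsim (hsim.forall₂.symm (forall₂_of_reflTransGen hsim hreach))
      refine ⟨w :: ws.erase w, nodup_cons.2 ⟨hnd.not_mem_erase, hnd.erase w⟩, ?_, ?_⟩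
      · exact forall_mem_cons.2 ⟨hwu, fun w' hw' => hws w' (erase_subset hw')⟩
      · exact (write_overlay_erase hwu.2.1 fun w' hw' => (hws w' hw').2.1).symm
  · rintro ⟨ws, -, hws, rfl⟩
    induction ws with
    | nil => exact .refl
    | cons w ws ih =>
      rw [forall_mem_cons] at hws
      have hreach := ih hws.2
      refine hreach.tail (guidedStep_iff_exists_write.2 ⟨w, ?_, rfl⟩)
      exact hws.1.of_forall₂ hsim (forall₂_of_reflTransGen hsim hreach)

def shift (s : List (List α × ℕ)) : List (List α × ℕ) :=
  (s.filter fun e => e.2 + 1 < e.1.length).map fun e => (e.1, e.2 + 1)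

/-- `S i` is the stack of writes covering position `i`, most recent first, as entries: those of
offset `0` start at `i`, the others continue the writes of `S (i - 1)`, in the same order. -/
structure IsStackRun (sim : α → α → Prop) (G : Set (List α)) (u v : List α)
    (S : ℕ → List (List α × ℕ)) : Prop where
  nodup : ∀ i, (S i).Nodup
  mem : ∀ i, ∀ e ∈ S i, e.1 ∈ G ∧ e.2 < e.1.length
  start : (S 0).filter (·.2 ≠ 0) = []
  step : ∀ i, (S (i + 1)).filter (·.2 ≠ 0) = shift (S i)
  rel : ∀ i, ∀ e ∈ S i, Option.Rel sim u[i]? e.1[e.2]?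
  getElem?_eq : ∀ i, v[i]? = (topLetter (S i)).or u[i]?

theorem isStackRun_stackAt {u : List α} {ws : List (List α × ℕ)} (hnd : ws.Nodup)
    (hws : ∀ w ∈ ws, Admissible sim G u w) :
    IsStackRun sim G u (overlay ws u) (stackAt ws) where
  nodup i := by
    refine (hnd.filter _).map_on fun w hw w' hw' heq => ?_
    simp only [mem_filter, decide_eq_true_eq] at hw hw'
    simp only [flipAt, Prod.mk.injEq] at heq
    exact Prod.ext heq.1 (by grind [Covers])
  mem i e he := by
    obtain ⟨w, hw, hi, rfl⟩ := mem_stackAt.1 he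
    exact ⟨(hws w hw).1, by simp only [flipAt]; grind [Covers]⟩
  start := by
    refine filter_eq_nil_iff.2 fun e he => ?_
    obtain ⟨w, -, -, rfl⟩ := mem_stackAt.1 he
    simp [flipAt]
  step i := by
    simp only [stackAt, shift, filter_map, map_map, filter_filter]
    refine (map_congr_left fun w hw => ?_).trans (congrArg _ (filter_congr fun w _ => ?_))
    · simp only [mem_filter, Covers, flipAt, Function.comp] at hw ⊢
      grind
    · simp only [Covers, flipAt, Function.comp]
      grind
  rel i e he := by
    obtain ⟨w, hw, hi, rfl⟩ := mem_stackAt.1 he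
    exact (hws w hw).rel_getElem? hi
  getElem?_eq := getElem?_overlay fun w hw => (hws w hw).2.1

namespace IsStackRun

variable {u v : List α} {S : ℕ → List (List α × ℕ)} (hS : IsStackRun sim G u v S)
include hS

theorem mem_succ {g : List α} {k i : ℕ} (he : (g, k) ∈ S i) (hk : k + 1 < g.length) :
    (g, k + 1) ∈ S (i + 1) := by
  have h : (g, k + 1) ∈ shift (S i) :=
    mem_map.2 ⟨(g, k), mem_filter.2 ⟨he, by simpa⟩, rfl⟩
  rw [← hS.step i] at h
  exact (mem_filter.1 h).1

theorem mem_pred {g : List α} {k i : ℕ} (he : (g, k + 1) ∈ S i) :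
    ∃ j, i = j + 1 ∧ (g, k) ∈ S j := by
  have h : (g, k + 1) ∈ (S i).filter (·.2 ≠ 0) := mem_filter.2 ⟨he, by simp⟩
  cases i with
  | zero => rw [hS.start] at h; exact absurd h not_mem_nil
  | succ j =>
    rw [hS.step j, shift] at h
    obtain ⟨⟨g', k'⟩, he', heq⟩ := mem_map.1 h
    simp only [Prod.mk.injEq, Nat.add_right_cancel_iff] at heq
    obtain ⟨rfl, rfl⟩ := heq
    exact ⟨j, rfl, (mem_filter.1 he').1⟩

theorem mem_start {g : List α} {k i : ℕ} (he : (g, k) ∈ S i) :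
    k ≤ i ∧ (g, 0) ∈ S (i - k) := by
  induction k generalizing i with
  | zero => exact ⟨i.zero_le, he⟩
  | succ k ih =>
    obtain ⟨j, rfl, hj⟩ := hS.mem_pred he
    obtain ⟨hkj, h0⟩ := ih hj
    exact ⟨by omega, by simpa using h0⟩

theorem mem_of_mem_start {g : List α} {p d : ℕ} (h0 : (g, 0) ∈ S p) (hd : d < g.length) :
    (g, d) ∈ S (p + d) := by
  induction d with
  | zero => exact h0
  | succ d ih => exact hS.mem_succ (ih (by omega)) hd

theorem lt_length_of_mem {i : ℕ} {e : List α × ℕ} (he : e ∈ S i) : i < u.length := by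
  have h := hS.rel i e he
  rw [getElem?_eq_getElem (hS.mem i e he).2] at h
  by_contra hi
  rw [getElem?_eq_none (not_lt.1 hi)] at h
  exact Option.not_rel_none_some h

theorem flipAt_mem_of_covers {i j : ℕ} {e : List α × ℕ} (he : e ∈ S i)
    (hj : Covers (flipAt i e) j) : flipAt j (flipAt i e) ∈ S j := by
  obtain ⟨g, k⟩ := e
  obtain ⟨hki, h0⟩ := hS.mem_start he
  simp only [Covers, flipAt] at hj ⊢
  have := hS.mem_of_mem_start h0 (d := j - (i - k)) (by omega)
  rwa [Nat.add_sub_cancel' hj.1] at this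

theorem admissible_flipAt {i : ℕ} {e : List α × ℕ} (he : e ∈ S i) :
    Admissible sim G u (flipAt i e) := by
  obtain ⟨g, k⟩ := e
  obtain ⟨hk, h0⟩ := hS.mem_start he
  obtain ⟨hg, hkg⟩ : g ∈ G ∧ k < g.length := hS.mem i _ he
  refine admissible_iff.2 ⟨hg, ?_, fun d hd => hS.rel _ _ (hS.mem_of_mem_start h0 hd)⟩
  have := hS.lt_length_of_mem (hS.mem_of_mem_start h0 (d := g.length - 1) (by omega))
  simp only [flipAt]
  omega

theorem map_flipAt_filter_sublist (j : ℕ) :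
    ((S (j + 1)).filter (·.2 ≠ 0)).map (flipAt (j + 1)) <+ (S j).map (flipAt j) := by
  rw [hS.step j, shift, map_map]
  calc _ = ((S j).filter _).map (flipAt j) := map_congr_left fun e _ => by simp [flipAt]
    _ <+ (S j).map (flipAt j) := filter_sublist.map _

theorem nodup_map_flipAt (i : ℕ) : ((S i).map (flipAt i)).Nodup := by
  refine (hS.nodup i).map_on fun ⟨g, k⟩ he ⟨g', k'⟩ he' heq => ?_
  have := (hS.mem_start he).1
  have := (hS.mem_start he').1
  simp only [flipAt, Prod.mk.injEq] at heq
  exact Prod.ext heq.1 (by omega)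

theorem exists_order (n : ℕ) :
    ∃ W : List (List α × ℕ), W.Nodup ∧ (∀ i < n, (S i).map (flipAt i) <+ W) ∧
      ∀ w ∈ W, ∃ i < n, ∃ e ∈ S i, w = flipAt i e := by
  classical
  induction n with
  | zero => exact ⟨[], nodup_nil, nofun, nofun⟩
  | succ n ih =>
    obtain ⟨W, hW, hsub, hmem⟩ := ih
    -- the writes continuing at `n` occur in `W` in the order of `S n`; the others start at `n`
    have hcont : ((S n).filter (·.2 ≠ 0)).map (flipAt n) <+ W := by
      cases n with
      | zero => rw [hS.start]; exact nil_sublist W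
      | succ j => exact (hS.map_flipAt_filter_sublist j).trans (hsub j j.lt_succ_self)
    have hfilter : ((S n).map (flipAt n)).filter (· ∈ W) =
        ((S n).filter (·.2 ≠ 0)).map (flipAt n) := by
      rw [filter_map]
      refine congrArg _ (filter_congr fun e he =>
        decide_eq_decide.2 ⟨fun heW => ?_, fun he0 => ?_⟩)
      · obtain ⟨i, hi, e', he', heq⟩ := hmem _ heW
        have := (hS.mem_start he').1
        simp only [flipAt, Prod.mk.injEq] at heq
        omega
      · exact hcont.subset (mem_map_of_mem (mem_filter.2 ⟨he, by simpa using he0⟩))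
    obtain ⟨M, hWM, hnM, hM, hMmem⟩ :=
      exists_merge hW (hS.nodup_map_flipAt n) (fun _ _ => decide_eq_true_iff) (hfilter ▸ hcont)
    refine ⟨M, hM, fun i hi => ?_, fun w hw => ?_⟩
    · rcases Nat.lt_succ_iff_lt_or_eq.1 hi with hi | rfl
      · exact (hsub i hi).trans hWM
      · exact hnM
    · rcases hMmem w hw with hw | hw
      · obtain ⟨i, hi, e, he, rfl⟩ := hmem w hw
        exact ⟨i, by omega, e, he, rfl⟩
      · obtain ⟨e, he, rfl⟩ := mem_map.1 hw
        exact ⟨n, by omega, e, he, rfl⟩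

theorem stackAt_eq {W : List (List α × ℕ)} (hW : W.Nodup)
    (hsub : ∀ i, (S i).map (flipAt i) <+ W)
    (hmem : ∀ w ∈ W, ∃ i, ∃ e ∈ S i, w = flipAt i e)
    (i : ℕ) : stackAt W i = S i := by
  have hcov : W.filter (Covers · i) = (S i).map (flipAt i) := by
    refine filter_eq_of_sublist hW (hsub i) fun w hw => ⟨fun hwi => ?_, fun hwi => ?_⟩
    · obtain ⟨j, e, he, rfl⟩ := hmem w hw
      have hwi' : Covers (flipAt j e) i := of_decide_eq_true hwi
      exact mem_map.2 ⟨_, hS.flipAt_mem_of_covers he hwi', flipAt_flipAt hwi'.1⟩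
    · obtain ⟨⟨g, k⟩, he, rfl⟩ := mem_map.1 hwi
      have := (hS.mem_start he).1
      have : k < g.length := (hS.mem i _ he).2
      refine decide_eq_true ?_
      simp only [Covers, flipAt]
      omega
  rw [stackAt, hcov, map_map]
  exact (map_congr_left fun e he => flipAt_flipAt (hS.mem_start he).1).trans (map_id _)

theorem exists_overlay :
    ∃ ws, ws.Nodup ∧ (∀ w ∈ ws, Admissible sim G u w) ∧ v = overlay ws u := by
  obtain ⟨W, hW, hsub, hmem⟩ := hS.exists_order u.length
  have hsub' : ∀ i, (S i).map (flipAt i) <+ W := fun i => by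
    by_cases hi : i < u.length
    · exact hsub i hi
    · rw [eq_nil_iff_forall_not_mem.2 fun e he => hi (hS.lt_length_of_mem he)]
      exact nil_sublist W
  have hmem' : ∀ w ∈ W, ∃ i, ∃ e ∈ S i, w = flipAt i e := fun w hw =>
    let ⟨i, _, he⟩ := hmem w hw; ⟨i, he⟩
  have hadm : ∀ w ∈ W, Admissible sim G u w := fun w hw => by
    obtain ⟨i, e, he, rfl⟩ := hmem' w hw
    exact hS.admissible_flipAt he
  refine ⟨W, hW, hadm, ext_getElem? fun i => ?_⟩
  rw [getElem?_overlay fun w hw => (hadm w hw).2.1, hS.stackAt_eq hW hsub' hmem',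
    hS.getElem?_eq]

end IsStackRun

theorem reflTransGen_iff_exists_isStackRun (hsim : Equivalence sim) {u v : List α} :
    Relation.ReflTransGen (GuidedStep sim G) u v ↔ ∃ S, IsStackRun sim G u v S := by
  rw [reflTransGen_iff_exists_overlay hsim]
  constructor
  · rintro ⟨ws, hnd, hws, rfl⟩
    exact ⟨stackAt ws, isStackRun_stackAt hnd hws⟩
  · rintro ⟨S, hS⟩
    exact hS.exists_overlay

abbrev StackState (G : Set (List α)) : Type :=
  {s : List (List α × ℕ) // s.Nodup ∧ ∀ e ∈ s, e.1 ∈ G ∧ e.2 < e.1.length}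

theorem finite_stackState (hG : G.Finite) : Finite (StackState G) := by
  have hE : {e : List α × ℕ | e.1 ∈ G ∧ e.2 < e.1.length}.Finite := by
    refine (hG.biUnion fun g _ => (Set.finite_Iio g.length).image (Prod.mk g)).subset ?_
    rintro ⟨g, k⟩ ⟨hg, hk⟩
    exact Set.mem_biUnion hg ⟨k, hk, rfl⟩
  exact hE.setOf_nodup.to_subtype

/-- The state before reading the `i`-th pair is the stack at position `i`; the transition checks
that pair against it and guesses the stack at position `i + 1`. -/
def stackNFA (sim : α → α → Prop) (G : Set (List α)) : NFA (α × α) (StackState G) where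
  step s x := {t | (∀ e ∈ s.1, Option.Rel sim (some x.1) e.1[e.2]?) ∧
    some x.2 = (topLetter s.1).or (some x.1) ∧ t.1.filter (·.2 ≠ 0) = shift s.1}
  start := {s | s.1.filter (·.2 ≠ 0) = []}
  accept := {s | s.1 = []}

theorem isStackRun_of_run {x : List (α × α)} {f : ℕ → StackState G}
    (h0 : f 0 ∈ (stackNFA sim G).start)
    (hstep : ∀ i (h : i < x.length), f (i + 1) ∈ (stackNFA sim G).step (f i) x[i])
    (hacc : f x.length ∈ (stackNFA sim G).accept) :
    IsStackRun sim G (x.map Prod.fst) (x.map Prod.snd)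
      fun i => if i < x.length then (f i).1 else [] where
  nodup i := by split_ifs; exacts [(f i).2.1, nodup_nil]
  mem i := by split_ifs; exacts [(f i).2.2, by simp]
  start := by split_ifs; exacts [h0, rfl]
  step i := by
    by_cases h1 : i + 1 < x.length
    · rw [if_pos h1, if_pos (by omega)]
      exact (hstep i (by omega)).2.2
    · rw [if_neg h1, filter_nil]
      split_ifs with h2
      · have := (hstep i h2).2.2
        rwa [show i + 1 = x.length by omega, show (f x.length).1 = [] from hacc,
          filter_nil] at this
      · rfl
  rel i e he := by
    split_ifs at he with hi
    · simpa [hi] using (hstep i hi).1 e he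
    · simp at he
  getElem?_eq i := by
    split_ifs with hi
    · simpa [hi] using (hstep i hi).2.1
    · simp [topLetter, hi]

theorem mem_stackNFA_accepts {x : List (α × α)} :
    x ∈ (stackNFA sim G).accepts ↔
      ∃ S, IsStackRun sim G (x.map Prod.fst) (x.map Prod.snd) S := by
  rw [NFA.mem_accepts_iff_exists_run]
  constructor
  · rintro ⟨f, h0, hstep, hacc⟩
    exact ⟨_, isStackRun_of_run h0 hstep hacc⟩
  · rintro ⟨S, hS⟩
    refine ⟨fun i => ⟨S i, hS.nodup i, hS.mem i⟩, hS.start, fun i hi => ?_, ?_⟩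
    · refine ⟨fun e he => ?_, ?_, hS.step i⟩
      · simpa [hi] using hS.rel i e he
      · simpa [hi] using hS.getElem?_eq i
    · exact eq_nil_iff_forall_not_mem.2 fun e he => by simpa using hS.lt_length_of_mem he

def reachLanguage (sim : α → α → Prop) (G : Set (List α)) : Language (α × α) :=
  {x | Relation.ReflTransGen (GuidedStep sim G) (x.map Prod.fst) (x.map Prod.snd)}

theorem isRegular_reachLanguage (hsim : Equivalence sim) (hG : G.Finite) :
    (reachLanguage sim G).IsRegular := by
  have := finite_stackState hG
  have h : (stackNFA sim G).accepts = reachLanguage sim G :=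
    Set.ext fun _ => mem_stackNFA_accepts.trans (reflTransGen_iff_exists_isStackRun hsim).symm
  exact h ▸ (stackNFA sim G).isRegular_accepts

theorem setOf_exists_reflTransGen_eq (hsim : Equivalence sim) (L : Language α) :
    {v | ∃ u ∈ L, Relation.ReflTransGen (GuidedStep sim G) u v} =
      Language.map Prod.snd (List.map Prod.fst ⁻¹' L ⊓ reachLanguage sim G) := by
  ext v
  constructor
  · rintro ⟨u, hu, h⟩
    have hlen := (forall₂_of_reflTransGen hsim h).length_eq
    refine ⟨u.zip v, ⟨?_, ?_⟩, map_snd_zip hlen.ge⟩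
    · show (u.zip v).map Prod.fst ∈ L
      rwa [map_fst_zip hlen.le]
    · show Relation.ReflTransGen _ ((u.zip v).map Prod.fst) ((u.zip v).map Prod.snd)
      rwa [map_fst_zip hlen.le, map_snd_zip hlen.ge]
  · rintro ⟨x, ⟨hx, hreach⟩, rfl⟩
    exact ⟨x.map Prod.fst, hx, hreach⟩

end GuidedRewriting

theorem guided_rewriting_preserves_regularity_general
    {α : Type} (sim : α → α → Prop) (hsim : Equivalence sim)
    (G : Set (List α)) (hG : G.Finite) (L : Language α) (hL : L.IsRegular) :
    Language.IsRegular
      {v : List α | ∃ u ∈ L, Relation.ReflTransGen (GuidedStep sim G) u v} := by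
  rw [GuidedRewriting.setOf_exists_reflTransGen_eq hsim L]
  exact ((hL.preimage_map Prod.fst).inf (GuidedRewriting.isRegular_reachLanguage hsim hG)).map _

/-- If `∼` is an equivalence (adjustment) relation on a finite
alphabet, `G` is a finite set of guides and `L` is regular, then
`L_G = { v | ∃ u ∈ L, u ⇒* v }` is regular. -/
theorem guided_rewriting_preserves_regularity
    {α : Type} [Fintype α] (sim : α → α → Prop) (hsim : Equivalence sim)
    (G : Set (List α)) (hG : G.Finite) (L : Language α) (hL : L.IsRegular) :
    Language.IsRegular
      {v : List α | ∃ u ∈ L, Relation.ReflTransGen (GuidedStep sim G) u v} :=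
  guided_rewriting_preserves_regularity_general sim hsim G hG L hL
end

section
/- For every finite set of guides G ⊆ Σ₀·Σ*·Σ₀ and every string u ∈ Σ*, the set L^u_{i/d} = { v ∈ Σ* | u ⇒_{i/d}* v } of strings obtainable from u by guided insertion/deletion steps is finite. -/
/-- The homomorphism `π` erasing the distinguished symbol `0` (modelled as `none`). -/
def eraseZeros {α₀ : Type} (u : List (Option α₀)) : List α₀ := u.filterMap id

/-- A guided insertion/deletion step: a substring `y ∈ Σ₀·Σ*·Σ₀` of `u` with
`π(y) = π(g)` for some guide `g ∈ G` is replaced by `g`. -/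
def IdStep {α₀ : Type} (G : Set (List (Option α₀))) (u v : List (Option α₀)) : Prop :=
  ∃ g ∈ G, ∃ x y z : List (Option α₀),
    u = x ++ y ++ z ∧ v = x ++ g ++ z ∧
    (∃ (a b : α₀) (m : List (Option α₀)), y = some a :: m ++ [some b]) ∧
    eraseZeros y = eraseZeros g

/-!
A step preserves `π`, so every reachable word has the same nonzero letters as `u`; it remains
to bound the runs of `0`s. A step only writes a guide, which begins and ends with a nonzero
letter, so a run of `0`s in the result lies in the untouched context or strictly inside the
guide. Hence no reachable word has a run of `0`s longer than `M = |u| + max_{g ∈ G} |g|`, and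
a word with `|π u|` nonzero letters and no run longer than `M` has length at most
`|π u| (M + 1) + M`.
-/

theorem List.IsInfix.of_append_cons_of_not_mem {α : Type*} {r l₁ l₂ : List α} {a : α}
    (h : r <:+: l₁ ++ a :: l₂) (ha : a ∉ r) : r <:+: l₁ ∨ r <:+: l₂ := by
  rcases List.infix_append_iff.1 h with h | h | ⟨s, t, rfl, hs, ht⟩
  · exact .inl h
  · rcases List.infix_cons_iff.1 h with h | h
    · rcases List.prefix_cons_iff.1 h with rfl | ⟨t, rfl, -⟩
      · exact .inl List.nil_infix
      · exact absurd List.mem_cons_self ha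
    · exact .inr h
  · rcases List.prefix_cons_iff.1 ht with rfl | ⟨t, rfl, -⟩
    · exact .inl (by simpa using hs.isInfix)
    · exact absurd (by simp) ha

section ZeroRuns

variable {α : Type}

def HasZeroRun (n : ℕ) (v : List (Option α)) : Prop :=
  List.replicate n none <:+: v

theorem HasZeroRun.length_le {n : ℕ} {v : List (Option α)} (h : HasZeroRun n v) :
    n ≤ v.length := by
  simpa using List.IsInfix.length_le h

theorem HasZeroRun.mono {n : ℕ} {v w : List (Option α)} (h : HasZeroRun n v) (hvw : v <:+: w) :
    HasZeroRun n w :=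
  List.IsInfix.trans h hvw

@[simp]
theorem eraseZeros_cons_some (a : α) (v : List (Option α)) :
    eraseZeros (some a :: v) = a :: eraseZeros v :=
  rfl

@[simp]
theorem eraseZeros_cons_none (v : List (Option α)) : eraseZeros (none :: v) = eraseZeros v :=
  rfl

theorem eraseZeros_append (x y : List (Option α)) :
    eraseZeros (x ++ y) = eraseZeros x ++ eraseZeros y :=
  List.filterMap_append

theorem hasZeroRun_of_hasZeroRun_guide {n : ℕ} {x m z : List (Option α)} {a b : α}
    (h : HasZeroRun n (x ++ (some a :: m ++ [some b]) ++ z)) :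
    HasZeroRun n x ∨ HasZeroRun n m ∨ HasZeroRun n z := by
  have not_mem (c : α) : some c ∉ List.replicate n none := by simp [List.mem_replicate]
  replace h : List.replicate n none <:+: x ++ some a :: (m ++ some b :: z) := by
    simpa [HasZeroRun] using h
  rcases h.of_append_cons_of_not_mem (not_mem a) with hx | h
  · exact .inl hx
  · exact .inr (h.of_append_cons_of_not_mem (not_mem b))

theorem length_le_of_not_prefix_of_not_hasZeroRun {M : ℕ} :
    ∀ {v : List (Option α)} {c : ℕ}, ¬ List.replicate (c + 1) none <+: v →
      ¬ HasZeroRun (M + 1) v → v.length ≤ (eraseZeros v).length * (M + 1) + c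
  | [], _, _, _ => by simp [eraseZeros]
  | some a :: v, _, _, hrun => by
    have hv : ¬ HasZeroRun (M + 1) v := fun h => hrun (h.mono (List.suffix_cons _ _).isInfix)
    have := length_le_of_not_prefix_of_not_hasZeroRun (fun h => hv h.isInfix) hv
    simp only [eraseZeros_cons_some, List.length_cons, Nat.add_one_mul]
    omega
  | none :: v, 0, hpre, _ => absurd (by simp) hpre
  | none :: v, c + 1, hpre, hrun => by
    have := length_le_of_not_prefix_of_not_hasZeroRun (M := M) (v := v) (c := c)
      (fun h => hpre (List.cons_prefix_cons.2 ⟨rfl, h⟩))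
      (fun h => hrun (h.mono (List.suffix_cons _ _).isInfix))
    simp only [eraseZeros_cons_none, List.length_cons]
    omega

theorem length_le_of_not_hasZeroRun {M : ℕ} {v : List (Option α)}
    (h : ¬ HasZeroRun (M + 1) v) : v.length ≤ (eraseZeros v).length * (M + 1) + M :=
  length_le_of_not_prefix_of_not_hasZeroRun (fun hp => h hp.isInfix) h

end ZeroRuns

namespace IdStep

variable {α : Type} {G : Set (List (Option α))} {u v : List (Option α)}

theorem eraseZeros_eq (h : IdStep G u v) : eraseZeros v = eraseZeros u := by
  obtain ⟨g, -, x, y, z, rfl, rfl, -, hyg⟩ := h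
  simp only [eraseZeros_append, hyg]

theorem not_hasZeroRun {M : ℕ} (hGlen : ∀ g ∈ G, g.length ≤ M)
    (hGform : ∀ g ∈ G, ∃ (a b : α) (m : List (Option α)), g = some a :: m ++ [some b])
    (h : IdStep G u v) (hu : ¬ HasZeroRun (M + 1) u) : ¬ HasZeroRun (M + 1) v := by
  obtain ⟨g, hg, x, y, z, rfl, rfl, -, -⟩ := h
  obtain ⟨a, b, m, rfl⟩ := hGform g hg
  intro hv
  rcases hasZeroRun_of_hasZeroRun_guide hv with hx | hm | hz
  · exact hu (hx.mono (List.infix_append_left.trans (List.prefix_append _ _).isInfix))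
  · have := hGlen _ hg
    simp only [List.cons_append, List.length_cons, List.length_append] at this
    have := hm.length_le
    omega
  · exact hu (hz.mono (List.suffix_append _ _).isInfix)

end IdStep

/-- For every finite set of guides `G ⊆ Σ₀·Σ*·Σ₀` and every
string `u`, the set `L^u_{i/d} = { v | u ⇒_{i/d}* v }` is finite. -/
theorem insertion_deletion_finitely_many_rewrites
    {α₀ : Type} [Fintype α₀] (G : Set (List (Option α₀))) (hGfin : G.Finite)
    (hGform : ∀ g ∈ G, ∃ (a b : α₀) (m : List (Option α₀)), g = some a :: m ++ [some b])
    (u : List (Option α₀)) :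
    Set.Finite {v : List (Option α₀) | Relation.ReflTransGen (IdStep G) u v} := by
  obtain ⟨N, hN⟩ := (hGfin.image List.length).bddAbove
  set M := u.length + N
  have hGlen : ∀ g ∈ G, g.length ≤ M := fun g hg => (hN ⟨g, hg, rfl⟩).trans (Nat.le_add_left _ _)
  have invariant : ∀ v, Relation.ReflTransGen (IdStep G) u v →
      eraseZeros v = eraseZeros u ∧ ¬ HasZeroRun (M + 1) v := by
    intro v h
    induction h with
    | refl => exact ⟨rfl, fun hu => by have := hu.length_le; omega⟩
    | tail _ hstep ih =>
      exact ⟨hstep.eraseZeros_eq.trans ih.1, hstep.not_hasZeroRun hGlen hGform ih.2⟩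
  refine (List.finite_length_le (Option α₀) ((eraseZeros u).length * (M + 1) + M)).subset ?_
  intro v hv
  obtain ⟨hπ, hrun⟩ := invariant v hv
  simpa [hπ] using length_le_of_not_hasZeroRun hrun
end

section
/- Let ρ = (g_k, p_k)_{k=1}^r be a guided rewrite sequence for a string u ∈ Σ*. Then there exists a slice sequence σ = (sl_n)_{n=1}^{|u|} for u such that yield(σ) = yield(ρ). -/
/-- A guided rewrite sequence for `u`: a list of guide-position pairs `(g, p)`
with `g ∈ G`, `p + |g| ≤ |u|` and `u[p+1, p+|g|] ∼ g`. -/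
def IsRewriteSeq {α : Type} (sim : α → α → Prop) (G : Set (List α)) (u : List α)
    (ρ : List (List α × ℕ)) : Prop :=
  ∀ gp ∈ ρ, gp.1 ∈ G ∧ gp.2 + gp.1.length ≤ u.length ∧
    List.Forall₂ sim ((u.drop gp.2).take gp.1.length) gp.1

/-- Apply a single guided rewrite `(g, p)` to `u`, replacing `u[p+1, p+|g|]` by `g`. -/
def applyRW {α : Type} (u : List α) (gp : List α × ℕ) : List α :=
  u.take gp.2 ++ gp.1 ++ u.drop (gp.2 + gp.1.length)

/-- The yield of a guided rewrite sequence: the final string `u_r`. -/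
def rwYield {α : Type} (u : List α) (ρ : List (List α × ℕ)) : List α :=
  ρ.foldl applyRW u

/-- A slice for a symbol `a`: a finite sequence of guide-offset pairs `(g, q)`
with `g ∈ G`, `1 ≤ q ≤ |g|` and `a ∼ g[q]` (offsets are 1-based). -/
def IsSlice {α : Type} (sim : α → α → Prop) (G : Set (List α))
    (sl : List (List α × ℕ)) (a : α) : Prop :=
  ∀ gq ∈ sl, gq.1 ∈ G ∧ 1 ≤ gq.2 ∧ gq.2 ≤ gq.1.length ∧
    ∃ b, gq.1[gq.2 - 1]? = some b ∧ sim a b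

/-- The yield of a slice for the symbol `a`: the symbol `g[q]` of its last
guide-offset pair, or `a` itself if the slice is empty. -/
def sliceYield {α : Type} (a : α) (sl : List (List α × ℕ)) : α :=
  match sl.getLast? with
  | some gq => (gq.1[gq.2 - 1]?).getD a
  | none => a

/-- A start slice: all offsets equal `1`. -/
def IsStartSlice {α : Type} (sl : List (List α × ℕ)) : Prop :=
  ∀ gq ∈ sl, gq.2 = 1

/-- An end slice: each offset equals the length of its guide. -/
def IsEndSlice {α : Type} (sl : List (List α × ℕ)) : Prop :=
  ∀ gq ∈ sl, gq.2 = gq.1.length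

/-- `γ` is the cut for slices `sl` and `sl'`: a monotone partial injection from
the index set of `sl` to that of `sl'` with `γ(i) = j` iff `g_i = g'_j` and
`q_i + 1 = q'_j`; indexes outside the domain carry the last offset of their
guide, indexes outside the range carry offset `1`. -/
def IsCut {α : Type} (sl sl' : List (List α × ℕ)) (γ : ℕ → Option ℕ) : Prop :=
  (∀ i j, γ i = some j → i < sl.length ∧ j < sl'.length) ∧
  (∀ i i' j j', γ i = some j → γ i' = some j' → i < i' → j < j') ∧
  (∀ (i : ℕ) (hi : i < sl.length) (j : ℕ) (hj : j < sl'.length),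
      γ i = some j ↔
        (sl.get ⟨i, hi⟩).1 = (sl'.get ⟨j, hj⟩).1 ∧
        (sl.get ⟨i, hi⟩).2 + 1 = (sl'.get ⟨j, hj⟩).2) ∧
  (∀ (i : ℕ) (hi : i < sl.length), γ i = none →
      (sl.get ⟨i, hi⟩).2 = (sl.get ⟨i, hi⟩).1.length) ∧
  (∀ (j : ℕ) (hj : j < sl'.length), (∀ i, γ i ≠ some j) →
      (sl'.get ⟨j, hj⟩).2 = 1)

/-- A slice sequence for `u`: one slice per position of `u`, the first being a
start slice, the last an end slice, and any two neighbouring slices being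
related by a cut. -/
def IsSliceSeq {α : Type} (sim : α → α → Prop) (G : Set (List α)) (u : List α)
    (σ : List (List (List α × ℕ))) : Prop :=
  σ.length = u.length ∧
  (∀ (n : ℕ) (sl : List (List α × ℕ)) (a : α),
      σ[n]? = some sl → u[n]? = some a → IsSlice sim G sl a) ∧
  (∀ (n : ℕ) (sl sl' : List (List α × ℕ)),
      σ[n]? = some sl → σ[n + 1]? = some sl' → ∃ γ, IsCut sl sl' γ) ∧
  (∀ sl, σ[0]? = some sl → IsStartSlice sl) ∧
  (∀ sl, σ[σ.length - 1]? = some sl → IsEndSlice sl)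

/-- The yield of a slice sequence for `u`: the concatenation of the yields of
its slices (position `n` uses `u[n]` as default symbol). -/
def seqYield {α : Type} (u : List α) (σ : List (List (List α × ℕ))) : List α :=
  (u.zip σ).map (fun p => sliceYield p.1 p.2)



lemma head?_filterMap' {β γ : Type*} (f : β → Option γ) (l : List β) :
    (l.filterMap f).head? = (l.find? (fun x => (f x).isSome)).bind f := by
  induction l with
  | nil => simp
  | cons a t ih =>
    cases h : f a with
    | none => simp [List.filterMap_cons, h, List.find?_cons, ih]
    | some b => simp [List.filterMap_cons, h, List.find?_cons]

lemma find?_reverse_dedup {β : Type*} [DecidableEq β] (p : β → Bool) (l : List β) :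
    l.dedup.reverse.find? p = l.reverse.find? p := by
  induction l with
  | nil => simp
  | cons a t ih =>
    by_cases h : a ∈ t
    · rw [List.dedup_cons_of_mem h, ih]
      rw [List.reverse_cons, List.find?_append]
      cases hf : t.reverse.find? p with
      | some b => simp
      | none =>
        have : ¬ p a := by
          have := List.find?_eq_none.mp hf a (by simpa using h)
          simpa using this
        simp [List.find?_cons, this]
    · rw [List.dedup_cons_of_notMem h, List.reverse_cons, List.reverse_cons,
        List.find?_append, List.find?_append, ih]

lemma filterMap_getElem?_exists {β γ : Type*} (f : β → Option γ) (l : List β) (i : ℕ) (c : γ)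
    (h : (l.filterMap f)[i]? = some c) :
    ∃ k, ∃ hk : k < l.length, f l[k] = some c ∧
      ((l.take k).filterMap f).length = i := by
  induction l generalizing i with
  | nil => simp at h
  | cons a t ih =>
    cases hf : f a with
    | none =>
      rw [List.filterMap_cons_none hf] at h
      obtain ⟨k, hk, h1, h2⟩ := ih i h
      exact ⟨k+1, by simpa using Nat.succ_lt_succ hk, h1,
        by simpa [List.take_succ_cons, List.filterMap_cons, hf] using h2⟩
    | some b =>
      rw [List.filterMap_cons_some hf] at h
      cases i with
      | zero =>
        simp only [List.getElem?_cons_zero, Option.some.injEq] at h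
        exact ⟨0, by simp, by simp [hf, h], by simp⟩
      | succ i =>
        obtain ⟨k, hk, h1, h2⟩ := ih i (by simpa using h)
        exact ⟨k+1, by simpa using Nat.succ_lt_succ hk, h1,
          by simp [List.take_succ_cons, List.filterMap_cons, hf, h2]⟩

lemma getElem?_filterMap_take {β γ : Type*} (f : β → Option γ) (l : List β) (k : ℕ)
    (hk : k < l.length) (c : γ) (h : f l[k] = some c) :
    (l.filterMap f)[((l.take k).filterMap f).length]? = some c := by
  have key : l.filterMap f = (l.take k).filterMap f ++ (l.drop k).filterMap f := by
    rw [← List.filterMap_append, List.take_append_drop]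
  rw [key, List.getElem?_append_right (le_refl _), Nat.sub_self,
    List.drop_eq_getElem_cons hk, List.filterMap_cons_some h]
  simp

lemma filterMap_take_length_mono {β γ : Type*} (f : β → Option γ) (l : List β) {k k' : ℕ}
    (hkk : k ≤ k') :
    ((l.take k).filterMap f).length ≤ ((l.take k').filterMap f).length := by
  have hpre : l.take k <+: l.take k' := by
    have : (l.take k').take k = l.take k := by
      rw [List.take_take, Nat.min_eq_left hkk]
    rw [← this]
    exact List.take_prefix _ _
  exact List.Sublist.length_le (List.Sublist.filterMap f hpre.sublist)

lemma filterMap_take_length_lt {β γ : Type*} (f : β → Option γ) (l : List β) {k k' : ℕ}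
    (hkk : k < k') (hk : k < l.length) {c : γ} (h : f l[k] = some c) :
    ((l.take k).filterMap f).length < ((l.take k').filterMap f).length := by
  have ht : l.take (k+1) = l.take k ++ [l[k]] := by
    rw [List.take_succ, List.getElem?_eq_getElem hk]; rfl
  have h1 : ((l.take (k+1)).filterMap f).length = ((l.take k).filterMap f).length + 1 := by
    rw [ht, List.filterMap_append, List.length_append]
    simp [List.filterMap_cons_some h]
  have h2 := filterMap_take_length_mono f l (show k+1 ≤ k' from hkk)
  omega

/-- The pair contributed by rewrite step `e` to the slice at position `n`. -/
def mkPair {α : Type} (n : ℕ) (e : List α × ℕ) : Option (List α × ℕ) :=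
  if e.2 ≤ n ∧ n < e.2 + e.1.length then some (e.1, n - e.2 + 1) else none

lemma mkPair_eq_some {α : Type} {n : ℕ} {e c : List α × ℕ} :
    mkPair n e = some c ↔ (e.2 ≤ n ∧ n < e.2 + e.1.length) ∧ c = (e.1, n - e.2 + 1) := by
  unfold mkPair; split <;> simp_all [eq_comm]

lemma mkPair_isSome {α : Type} {n : ℕ} {e : List α × ℕ} :
    (mkPair n e).isSome = true ↔ e.2 ≤ n ∧ n < e.2 + e.1.length := by
  unfold mkPair; split <;> simp_all

lemma applyRW_getElem? {α : Type} (v : List α) (e : List α × ℕ) (n : ℕ)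
    (hle : e.2 + e.1.length ≤ v.length) :
    (applyRW v e)[n]? =
      if e.2 ≤ n ∧ n < e.2 + e.1.length then e.1[n - e.2]? else v[n]? := by
  unfold applyRW
  have hp : e.2 ≤ v.length := by omega
  have hlen : (v.take e.2).length = e.2 := by simp [Nat.min_eq_left hp]
  have hA : (v.take e.2 ++ e.1).length = e.2 + e.1.length := by
    simp [hlen]
  by_cases h1 : n < e.2
  · rw [if_neg (by omega), List.getElem?_append, if_pos (by omega),
      List.getElem?_append, if_pos (by omega), List.getElem?_take, if_pos h1]
  · by_cases h2 : n < e.2 + e.1.length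
    · rw [if_pos ⟨by omega, h2⟩, List.getElem?_append, if_pos (by omega),
        List.getElem?_append_right (by omega), hlen]
    · rw [if_neg (by omega), List.getElem?_append_right (by omega), List.getElem?_drop, hA]
      congr 1
      omega

lemma applyRW_length {α : Type} (v : List α) (e : List α × ℕ)
    (hle : e.2 + e.1.length ≤ v.length) : (applyRW v e).length = v.length := by
  unfold applyRW
  simp only [List.length_append, List.length_take, List.length_drop]
  omega

lemma rwYield_snoc {α : Type} (u : List α) (ρ : List (List α × ℕ)) (e : List α × ℕ) :
    rwYield u (ρ ++ [e]) = applyRW (rwYield u ρ) e := by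
  simp [rwYield, List.foldl_append]

lemma rwYield_length {α : Type} {sim : α → α → Prop} {G : Set (List α)} (u : List α)
    (ρ : List (List α × ℕ)) (hρ : IsRewriteSeq sim G u ρ) :
    (rwYield u ρ).length = u.length := by
  induction ρ using List.reverseRecOn with
  | nil => rfl
  | append_singleton ρ e ih =>
    have h1 : IsRewriteSeq sim G u ρ := fun gp hgp => hρ gp (List.mem_append_left _ hgp)
    have he := hρ e (by simp)
    rw [rwYield_snoc, applyRW_length _ _ (by rw [ih h1]; exact he.2.1), ih h1]

lemma rwYield_getElem? {α : Type} {sim : α → α → Prop} {G : Set (List α)} (u : List α)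
    (ρ : List (List α × ℕ)) (hρ : IsRewriteSeq sim G u ρ) (n : ℕ) :
    (rwYield u ρ)[n]? =
      (ρ.reverse.find? (fun e => (mkPair n e).isSome)).elim u[n]? (fun e => e.1[n - e.2]?) := by
  induction ρ using List.reverseRecOn with
  | nil => simp [rwYield]
  | append_singleton ρ e ih =>
    have h1 : IsRewriteSeq sim G u ρ := fun gp hgp => hρ gp (List.mem_append_left _ hgp)
    have he := hρ e (by simp)
    rw [rwYield_snoc, applyRW_getElem? _ _ _ (by rw [rwYield_length u ρ h1]; exact he.2.1),
      List.reverse_append]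
    simp only [List.reverse_singleton, List.singleton_append, List.find?_cons]
    by_cases hc : e.2 ≤ n ∧ n < e.2 + e.1.length
    · rw [if_pos hc]
      have : (mkPair n e).isSome = true := mkPair_isSome.mpr hc
      simp [this]
    · rw [if_neg hc, ih h1]
      have : (mkPair n e).isSome = false := by
        rw [Bool.eq_false_iff, Ne, mkPair_isSome]; exact hc
      simp [this]

/-- For every guided rewrite sequence `ρ` for a string `u`
there exists a slice sequence `σ` for `u` with `yield(σ) = yield(ρ)`. -/
theorem rewriteSeq_to_sliceSeq
    {α : Type} [Fintype α] (sim : α → α → Prop) (hsim : Equivalence sim)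
    (G : Set (List α)) (hG : G.Finite) (u : List α)
    (ρ : List (List α × ℕ)) (hρ : IsRewriteSeq sim G u ρ) :
    ∃ σ : List (List (List α × ℕ)),
      IsSliceSeq sim G u σ ∧ seqYield u σ = rwYield u ρ := by
  classical
  set L : List (List α × ℕ) := ρ.dedup with hLdef
  set S : ℕ → List (List α × ℕ) := fun n => L.filterMap (mkPair n) with hSdef
  have hmem : ∀ {n : ℕ} {c : List α × ℕ}, c ∈ S n ↔ ∃ e ∈ ρ, mkPair n e = some c := by
    intro n c
    simp only [hSdef, List.mem_filterMap, hLdef, List.mem_dedup]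
  have hinj : ∀ (n : ℕ) (a b c : List α × ℕ),
      mkPair n a = some c → mkPair n b = some c → a = b := by
    intro n a b c ha hb
    rw [mkPair_eq_some] at ha hb
    obtain ⟨⟨ha1, ha2⟩, rfl⟩ := ha
    obtain ⟨⟨hb1, hb2⟩, hc⟩ := hb
    simp only [Prod.mk.injEq] at hc
    exact Prod.ext hc.1 (by omega)
  have hnodupS : ∀ n, (S n).Nodup := fun n =>
    List.Nodup.filterMap (fun a a' b hb hb' => hinj n a a' b hb hb') (List.nodup_dedup ρ)
  set σ : List (List (List α × ℕ)) := (List.range u.length).map S with hσdef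
  have hσn : ∀ {n : ℕ} {s : List (List α × ℕ)}, σ[n]? = some s ↔ n < u.length ∧ s = S n := by
    intro n s
    by_cases h : n < u.length
    · simp [hσdef, List.getElem?_map, List.getElem?_range h, h, eq_comm]
    · have h0 : (List.range u.length)[n]? = none := List.getElem?_eq_none (by simpa using h)
      simp [hσdef, List.getElem?_map, h0, h]
  refine ⟨σ, ⟨by simp [hσdef], ?_, ?_, ?_, ?_⟩, ?_⟩
  · -- slices
    intro n s a hs ha
    obtain ⟨hn, rfl⟩ := hσn.mp hs
    intro gq hgq
    obtain ⟨e, he, hmk⟩ := hmem.mp hgq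
    rw [mkPair_eq_some] at hmk
    obtain ⟨⟨h1, h2⟩, rfl⟩ := hmk
    obtain ⟨hG1, hlen1, hsim1⟩ := hρ e he
    have hq : n - e.2 + 1 - 1 = n - e.2 := by omega
    have hlt : n - e.2 < e.1.length := by omega
    dsimp only
    refine ⟨hG1, by omega, by omega, e.1[n - e.2], ?_, ?_⟩
    · rw [hq]
      exact List.getElem?_eq_getElem hlt
    · rw [List.forall₂_iff_get] at hsim1
      obtain ⟨hl2, hget⟩ := hsim1
      have h₁ : n - e.2 < ((u.drop e.2).take e.1.length).length := by rw [hl2]; exact hlt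
      have hval : ((u.drop e.2).take e.1.length)[n - e.2]? = some a := by
        rw [List.getElem?_take, if_pos hlt, List.getElem?_drop,
          show e.2 + (n - e.2) = n by omega]
        exact ha
      rw [List.getElem?_eq_getElem h₁, Option.some.injEq] at hval
      have hfin := hget (n - e.2) h₁ hlt
      simp only [List.get_eq_getElem] at hfin
      rw [hval] at hfin
      exact hfin
  · -- cuts
    intro n s s' hs hs'
    obtain ⟨hn, rfl⟩ := hσn.mp hs
    obtain ⟨hn', rfl⟩ := hσn.mp hs'
    have hsucc : ∀ (e c : List α × ℕ), mkPair n e = some c →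
        (∃ e', e' ∈ ρ ∧ mkPair (n+1) e' = some (c.1, c.2 + 1)) →
        mkPair (n+1) e = some (c.1, c.2 + 1) := by
      intro e c hmk hm
      obtain ⟨e', he', hmk'⟩ := hm
      rw [mkPair_eq_some] at hmk hmk' ⊢
      obtain ⟨⟨h1, h2⟩, rfl⟩ := hmk
      obtain ⟨⟨h1', h2'⟩, hc'⟩ := hmk'
      simp only [Prod.mk.injEq] at hc'
      obtain ⟨hc1, hc2⟩ := hc'
      have he2 : e'.2 = e.2 := by omega
      have hL1 : e'.1.length = e.1.length := by rw [← hc1]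
      refine ⟨⟨by omega, by omega⟩, ?_⟩
      show ((e.1 : List α), n - e.2 + 1 + 1) = (e.1, n + 1 - e.2 + 1)
      rw [show n - e.2 + 1 + 1 = n + 1 - e.2 + 1 from by omega]
    have huniq : ∀ (v : List α × ℕ) (j j' : ℕ), (S (n+1))[j]? = some v →
        (S (n+1))[j']? = some v → j = j' := by
      intro v j j' h h'
      obtain ⟨hj, hjv⟩ := List.getElem?_eq_some_iff.mp h
      obtain ⟨hj', hjv'⟩ := List.getElem?_eq_some_iff.mp h'
      exact (List.Nodup.getElem_inj_iff (hnodupS (n+1))).mp (hjv.trans hjv'.symm)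
    refine ⟨fun i => ((S n)[i]?).bind (fun c =>
      if h : ∃ j, (S (n+1))[j]? = some (c.1, c.2 + 1) then some h.choose else none),
      ?_, ?_, ?_, ?_, ?_⟩
    · -- bounds
      intro i j hij
      dsimp only at hij
      cases hci : (S n)[i]? with
      | none => rw [hci] at hij; simp at hij
      | some c =>
        rw [hci, Option.bind_some] at hij
        rcases Classical.em (∃ j0 : ℕ, (S (n+1))[j0]? = some (c.1, c.2 + 1)) with hm | hm
        · rw [dif_pos hm, Option.some.injEq] at hij
          refine ⟨(List.getElem?_eq_some_iff.mp hci).1, ?_⟩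
          have := (List.getElem?_eq_some_iff.mp hm.choose_spec).1
          omega
        · rw [dif_neg hm] at hij; simp at hij
    · -- monotone
      intro i i' j j' hij hij' hii
      dsimp only at hij hij'
      cases hci : (S n)[i]? with
      | none => rw [hci] at hij; simp at hij
      | some c =>
      cases hci' : (S n)[i']? with
      | none => rw [hci'] at hij'; simp at hij'
      | some c' =>
      rw [hci, Option.bind_some] at hij
      rw [hci', Option.bind_some] at hij'
      rcases Classical.em (∃ j0 : ℕ, (S (n+1))[j0]? = some (c.1, c.2 + 1)) with hm | hm
      swap
      · rw [dif_neg hm] at hij; simp at hij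
      rcases Classical.em (∃ j0 : ℕ, (S (n+1))[j0]? = some (c'.1, c'.2 + 1)) with hm' | hm'
      swap
      · rw [dif_neg hm'] at hij'; simp at hij'
      rw [dif_pos hm, Option.some.injEq] at hij
      rw [dif_pos hm', Option.some.injEq] at hij'
      obtain ⟨k, hk, hfk, hik⟩ := filterMap_getElem?_exists (mkPair n) L i c hci
      obtain ⟨k', hk', hfk', hik'⟩ := filterMap_getElem?_exists (mkPair n) L i' c' hci'
      have hkk : k < k' := by
        by_contra hcon
        have := filterMap_take_length_mono (mkPair n) L (le_of_not_gt hcon)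
        omega
      have hmm : ∃ e', e' ∈ ρ ∧ mkPair (n+1) e' = some (c.1, c.2 + 1) := by
        obtain ⟨j0, hj0⟩ := hm
        have := (List.getElem?_eq_some_iff.mp hj0).2
        obtain ⟨e', he', hmk'⟩ := hmem.mp (this ▸ List.getElem_mem (List.getElem?_eq_some_iff.mp hj0).1)
        exact ⟨e', he', hmk'⟩
      have hmm' : ∃ e', e' ∈ ρ ∧ mkPair (n+1) e' = some (c'.1, c'.2 + 1) := by
        obtain ⟨j0, hj0⟩ := hm'
        have := (List.getElem?_eq_some_iff.mp hj0).2
        obtain ⟨e', he', hmk'⟩ := hmem.mp (this ▸ List.getElem_mem (List.getElem?_eq_some_iff.mp hj0).1)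
        exact ⟨e', he', hmk'⟩
      have hf'k : mkPair (n+1) L[k] = some (c.1, c.2 + 1) := hsucc L[k] c hfk hmm
      have hf'k' : mkPair (n+1) L[k'] = some (c'.1, c'.2 + 1) := hsucc L[k'] c' hfk' hmm'
      have ht := getElem?_filterMap_take (mkPair (n+1)) L k hk _ hf'k
      have ht' := getElem?_filterMap_take (mkPair (n+1)) L k' hk' _ hf'k'
      have hj1 : j = ((L.take k).filterMap (mkPair (n+1))).length :=
        hij ▸ huniq _ _ _ hm.choose_spec ht
      have hj2 : j' = ((L.take k').filterMap (mkPair (n+1))).length :=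
        hij' ▸ huniq _ _ _ hm'.choose_spec ht'
      have := filterMap_take_length_lt (mkPair (n+1)) L hkk hk hf'k
      omega
    · -- iff
      intro i hi j hj
      have hci : (S n)[i]? = some ((S n)[i]) := List.getElem?_eq_getElem hi
      simp only [List.get_eq_getElem]
      constructor
      · intro hij
        rw [hci, Option.bind_some] at hij
        rcases Classical.em (∃ j0 : ℕ, (S (n+1))[j0]? = some (((S n)[i]).1, ((S n)[i]).2 + 1)) with hm | hm
        · rw [dif_pos hm, Option.some.injEq] at hij
          have hspec := hm.choose_spec
          rw [hij] at hspec
          have h2 := (List.getElem?_eq_some_iff.mp hspec).2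
          rw [h2]
          exact ⟨rfl, rfl⟩
        · rw [dif_neg hm] at hij; simp at hij
      · rintro ⟨hfst, hsnd⟩
        have hveq : (S (n+1))[j] = (((S n)[i]).1, ((S n)[i]).2 + 1) :=
          Prod.ext hfst.symm hsnd.symm
        have hm : ∃ j0, (S (n+1))[j0]? = some (((S n)[i]).1, ((S n)[i]).2 + 1) :=
          ⟨j, by rw [List.getElem?_eq_getElem hj, hveq]⟩
        rw [hci, Option.bind_some, dif_pos hm, Option.some.injEq]
        exact huniq _ _ _ hm.choose_spec (by rw [List.getElem?_eq_getElem hj, hveq])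
    · -- outside domain
      intro i hi hnone
      dsimp only at hnone
      rw [List.getElem?_eq_getElem hi, Option.bind_some] at hnone
      rcases Classical.em (∃ j0 : ℕ, (S (n+1))[j0]? = some (((S n)[i]).1, ((S n)[i]).2 + 1)) with hm | hm
      · rw [dif_pos hm] at hnone; simp at hnone
      · simp only [List.get_eq_getElem]
        have hcm : (S n)[i] ∈ S n := List.getElem_mem hi
        obtain ⟨e, he, hmk⟩ := hmem.mp hcm
        rw [mkPair_eq_some] at hmk
        obtain ⟨⟨h1, h2⟩, hceq⟩ := hmk
        have hq1 : ((S n)[i]).1 = e.1 := by rw [hceq]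
        have hq2 : ((S n)[i]).2 = n - e.2 + 1 := by rw [hceq]
        by_contra hne
        apply hm
        have hne' : n - e.2 + 1 ≠ e.1.length := by rw [← hq1, ← hq2]; exact hne
        have hmm : (((S n)[i]).1, ((S n)[i]).2 + 1) ∈ S (n+1) := by
          refine hmem.mpr ⟨e, he, ?_⟩
          rw [mkPair_eq_some]
          refine ⟨⟨by omega, by omega⟩, ?_⟩
          rw [hq1, hq2, show n - e.2 + 1 + 1 = n + 1 - e.2 + 1 from by omega]
        exact List.mem_iff_getElem?.mp hmm
    · -- outside range
      intro j hj hnever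
      simp only [List.get_eq_getElem]
      have hvm : (S (n+1))[j] ∈ S (n+1) := List.getElem_mem hj
      obtain ⟨e, he, hmk⟩ := hmem.mp hvm
      rw [mkPair_eq_some] at hmk
      obtain ⟨⟨h1, h2⟩, hveq⟩ := hmk
      have hv2 : ((S (n+1))[j]).2 = n + 1 - e.2 + 1 := by rw [hveq]
      have hv1 : ((S (n+1))[j]).1 = e.1 := by rw [hveq]
      by_contra hne
      have h1' : e.2 ≤ n := by omega
      have hcm : (e.1, n - e.2 + 1) ∈ S n :=
        hmem.mpr ⟨e, he, mkPair_eq_some.mpr ⟨⟨h1', by omega⟩, rfl⟩⟩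
      obtain ⟨i, hci⟩ := List.mem_iff_getElem?.mp hcm
      apply hnever i
      dsimp only
      rw [hci, Option.bind_some]
      dsimp only
      have hveq' : (S (n+1))[j] = (e.1, n - e.2 + 1 + 1) := by
        rw [hveq, show n + 1 - e.2 + 1 = n - e.2 + 1 + 1 from by omega]
      have hm : ∃ j0, (S (n+1))[j0]? = some ((e.1 : List α), n - e.2 + 1 + 1) :=
        ⟨j, by rw [List.getElem?_eq_getElem hj, hveq']⟩
      rw [dif_pos hm, Option.some.injEq]
      exact huniq _ _ _ hm.choose_spec (by rw [List.getElem?_eq_getElem hj, hveq'])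
  · -- start slice
    intro s hs
    obtain ⟨hn, rfl⟩ := hσn.mp hs
    intro gq hgq
    obtain ⟨e, he, hmk⟩ := hmem.mp hgq
    rw [mkPair_eq_some] at hmk
    obtain ⟨⟨h1, h2⟩, rfl⟩ := hmk
    show 0 - e.2 + 1 = 1
    omega
  · -- end slice
    intro s hs
    have hlen : σ.length = u.length := by simp [hσdef]
    rw [hlen] at hs
    rcases Nat.eq_zero_or_pos u.length with h0 | hpos
    · have hnil : σ = [] := by
        rw [hσdef, h0]
        simp
      rw [hnil] at hs
      simp at hs
    · obtain ⟨hn, rfl⟩ := hσn.mp hs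
      intro gq hgq
      obtain ⟨e, he, hmk⟩ := hmem.mp hgq
      rw [mkPair_eq_some] at hmk
      obtain ⟨⟨h1, h2⟩, rfl⟩ := hmk
      have hb := (hρ e he).2.1
      show u.length - 1 - e.2 + 1 = e.1.length
      omega
  · -- yield
    apply List.ext_getElem?
    intro n
    by_cases hn : n < u.length
    · have hu : u[n]? = some u[n] := List.getElem?_eq_getElem hn
      have hz : (u.zip σ)[n]? = some (u[n], S n) := by
        rw [List.getElem?_zip_eq_some]
        exact ⟨hu, hσn.mpr ⟨hn, rfl⟩⟩
      have hsy : (seqYield u σ)[n]? = some (sliceYield u[n] (S n)) := by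
        unfold seqYield
        rw [List.getElem?_map, hz]
        rfl
      rw [hsy, rwYield_getElem? u ρ hρ n]
      unfold sliceYield
      have hlast : (S n).getLast? =
          (ρ.reverse.find? (fun e => (mkPair n e).isSome)).bind (mkPair n) := by
        rw [← List.head?_reverse, hSdef]
        simp only
        rw [← List.filterMap_reverse, head?_filterMap', hLdef, find?_reverse_dedup]
      rw [hlast]
      cases hfind : ρ.reverse.find? (fun e => (mkPair n e).isSome) with
      | none => simp [hu]
      | some e =>
        have hsome : (mkPair n e).isSome = true := by simpa using List.find?_some hfind
        rw [mkPair_isSome] at hsome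
        have hmk : mkPair n e = some (e.1, n - e.2 + 1) := mkPair_eq_some.mpr ⟨hsome, rfl⟩
        have hq : n - e.2 + 1 - 1 = n - e.2 := by omega
        have hlt : n - e.2 < e.1.length := by omega
        simp only [Option.bind_some, hmk, Option.elim]
        simp [hq, List.getElem?_eq_getElem hlt]
    · have hlen1 : (seqYield u σ).length = u.length := by
        unfold seqYield
        simp [hσdef]
      have h1 : (seqYield u σ)[n]? = none := List.getElem?_eq_none (by omega)
      have h2 : (rwYield u ρ)[n]? = none :=
        List.getElem?_eq_none (by rw [rwYield_length u ρ hρ]; omega)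
      rw [h1, h2]
end

section
/- Let σ be a slice sequence for a string u ∈ Σ*. Then there exists a guided rewrite sequence ρ for u such that yield(ρ) = yield(σ). -/
/-!
Linked entries of neighbouring slices chain into threads: by the start, end and cut
conditions, an entry `(g, q)` at column `n` lies on a thread of entries `(g, 1), …, (g, |g|)`
at the columns `n + 1 - q, …, n - q + |g|`, which is the guided rewrite `(g, n + 1 - q)`.
Since cuts are monotone, threads never cross, so sweeping the columns from left to right one
can give every entry a rational height that is constant along threads and strictly increasing
within each slice (an entry without predecessor gets a value between its neighbours).
Applying the rewrites of the threads through the top entries of the slices in increasing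
order of height, the last rewrite covering a position is the one through its top entry,
whose symbol is the yield of that slice.
-/

theorem List.forall₂_take_drop_of_forall_lt {α β : Type*} {R : α → β → Prop} {u : List α}
    {v : List β} {p : ℕ}
    (h : ∀ k < v.length, ∃ a b, u[p + k]? = some a ∧ v[k]? = some b ∧ R a b) :
    List.Forall₂ R ((u.drop p).take v.length) v := by
  induction v generalizing p with
  | nil => exact List.Forall₂.nil
  | cons b v ih =>
    obtain ⟨a, b', ha, hb, hab⟩ := h 0 (by simp)
    obtain ⟨hp, rfl⟩ := List.getElem?_eq_some_iff.1 ha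
    simp only [Nat.add_zero] at hp hab
    cases hb
    rw [List.drop_eq_getElem_cons hp, List.length_cons, List.take_succ_cons]
    refine List.Forall₂.cons hab (ih fun k hk => ?_)
    simpa [Nat.add_right_comm, Nat.add_assoc] using h (k + 1) (by simpa using hk)

theorem List.pairwise_mergeSort_le_comp {β γ : Type*} [LinearOrder γ] (f : β → γ)
    (l : List β) :
    (l.mergeSort fun a b => f a ≤ f b).Pairwise fun a b => f a ≤ f b := by
  simpa using List.pairwise_mergeSort
    (fun a b c (hab : decide _ = true) (hbc : decide _ = true) => by
      simpa using (of_decide_eq_true hab).trans (of_decide_eq_true hbc))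
    (fun a b => by simpa using le_total _ _) l

section Rewriting
variable {α : Type}

def Covers (t : List α × ℕ) (x : ℕ) : Prop := t.2 ≤ x ∧ x < t.2 + t.1.length

theorem length_applyRW {w : List α} {t : List α × ℕ} (hb : t.2 + t.1.length ≤ w.length) :
    (applyRW w t).length = w.length := by
  simp only [applyRW, List.length_append, List.length_take, List.length_drop]
  omega

theorem getElem?_applyRW_of_covers {w : List α} {t : List α × ℕ} {x : ℕ}
    (hb : t.2 + t.1.length ≤ w.length) (hx : Covers t x) :
    (applyRW w t)[x]? = t.1[x - t.2]? := by
  obtain ⟨h₁, h₂⟩ := hx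
  simp only [applyRW, List.getElem?_append, List.length_append, List.length_take]
  rw [if_pos (by omega), if_neg (by omega), min_eq_left (by omega)]

theorem getElem?_applyRW_of_not_covers {w : List α} {t : List α × ℕ} {x : ℕ}
    (hb : t.2 + t.1.length ≤ w.length) (hx : ¬Covers t x) :
    (applyRW w t)[x]? = w[x]? := by
  simp only [Covers, not_and_or, not_le, not_lt] at hx
  simp only [applyRW, List.getElem?_append, List.length_append, List.length_take,
    List.getElem?_take, List.getElem?_drop, min_eq_left (by omega : t.2 ≤ w.length)]
  rcases hx with hx | hx
  · simp [hx, show x < t.2 + t.1.length by omega]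
  · rw [if_neg (by omega)]
    congr 1
    omega

theorem length_rwYield {w : List α} {ρ : List (List α × ℕ)}
    (hb : ∀ t ∈ ρ, t.2 + t.1.length ≤ w.length) : (rwYield w ρ).length = w.length := by
  induction ρ generalizing w with
  | nil => rfl
  | cons t ρ ih =>
    have ht := length_applyRW (hb t (List.mem_cons_self ..))
    exact (ih fun t' ht' => ht ▸ hb t' (List.mem_cons_of_mem _ ht')).trans ht

theorem getElem?_rwYield_of_forall_not_covers {w : List α} {ρ : List (List α × ℕ)} {x : ℕ}
    (hb : ∀ t ∈ ρ, t.2 + t.1.length ≤ w.length) (hx : ∀ t ∈ ρ, ¬Covers t x) :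
    (rwYield w ρ)[x]? = w[x]? := by
  induction ρ generalizing w with
  | nil => rfl
  | cons t ρ ih =>
    have ht := hb t (List.mem_cons_self ..)
    refine (ih (fun t' ht' => (length_applyRW ht).symm ▸ hb t' (List.mem_cons_of_mem _ ht'))
      fun t' ht' => hx t' (List.mem_cons_of_mem _ ht')).trans ?_
    exact getElem?_applyRW_of_not_covers ht (hx t (List.mem_cons_self ..))

theorem getElem?_rwYield_map_of_pairwise {β γ : Type*} [Preorder γ] (f : β → List α × ℕ)
    (key : β → γ) {l : List β} (hl : l.Pairwise fun a b => key a ≤ key b) {w : List α}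
    (hb : ∀ b ∈ l, (f b).2 + (f b).1.length ≤ w.length) {x : ℕ} {b : β} (hbl : b ∈ l)
    (hx : Covers (f b) x) (hmax : ∀ b' ∈ l, Covers (f b') x → key b' < key b ∨ f b' = f b) :
    (rwYield w (l.map f))[x]? = (f b).1[x - (f b).2]? := by
  induction l using List.reverseRecOn with
  | nil => simp at hbl
  | append_singleton l c ih =>
    have hbl' : ∀ b' ∈ l, (f b').2 + (f b').1.length ≤ w.length :=
      fun b' hb' => hb b' (List.mem_append_left _ hb')
    have hc : (f c).2 + (f c).1.length ≤ (rwYield w (l.map f)).length :=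
      (length_rwYield fun t ht => by
        obtain ⟨b', hb', rfl⟩ := List.mem_map.1 ht
        exact hbl' b' hb').symm ▸ hb c (by simp)
    rw [List.map_append, List.map_singleton, rwYield, List.foldl_append, List.foldl_cons,
      List.foldl_nil, ← rwYield]
    rw [List.pairwise_append] at hl
    by_cases hcx : Covers (f c) x
    · rw [getElem?_applyRW_of_covers hc hcx]
      rcases hmax c (by simp) hcx with hlt | heq
      · rcases List.mem_append.1 hbl with hbl | hbl
        · exact absurd (hl.2.2 b hbl c (by simp)) (not_le_of_gt hlt)
        · exact absurd (List.mem_singleton.1 hbl ▸ hlt) (lt_irrefl _)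
      · rw [heq]
    · rw [getElem?_applyRW_of_not_covers hc hcx]
      have hbl : b ∈ l := by
        rcases List.mem_append.1 hbl with hbl | hbl
        · exact hbl
        · exact absurd (List.mem_singleton.1 hbl ▸ hx) hcx
      exact ih hl.1 hbl' hbl fun b' hb' => hmax b' (List.mem_append_left _ hb')

end Rewriting

theorem getElem?_seqYield {α : Type} {u : List α} {σ : List (List (List α × ℕ))}
    (hlen : σ.length = u.length) (x : ℕ) :
    (seqYield u σ)[x]? = u[x]?.map fun a => sliceYield a (σ.getD x []) := by
  simp only [seqYield, List.getElem?_map]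
  rcases lt_or_ge x u.length with h | h
  · simp [h, hlen ▸ h]
  · simp [h]

section Cuts
variable {α : Type} {sl sl' : List (List α × ℕ)} {γ : ℕ → Option ℕ} {i i' j j' q : ℕ}
  {g : List α}

def Link (sl sl' : List (List α × ℕ)) (i j : ℕ) : Prop :=
  ∃ g q, sl[i]? = some (g, q) ∧ sl'[j]? = some (g, q + 1)

namespace IsCut

theorem eq_some_iff_link (hγ : IsCut sl sl' γ) : γ i = some j ↔ Link sl sl' i j := by
  constructor
  · intro h
    obtain ⟨hi, hj⟩ := hγ.1 i j h
    obtain ⟨hg, hq⟩ := (hγ.2.2.1 i hi j hj).1 h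
    refine ⟨_, _, List.getElem?_eq_getElem hi, ?_⟩
    simp only [List.get_eq_getElem] at hg hq ⊢
    rw [List.getElem?_eq_getElem hj, hg, hq]
  · rintro ⟨g, q, hi, hj⟩
    obtain ⟨hi, hi'⟩ := List.getElem?_eq_some_iff.1 hi
    obtain ⟨hj, hj'⟩ := List.getElem?_eq_some_iff.1 hj
    exact (hγ.2.2.1 i hi j hj).2 (by simp [hi', hj'])

theorem lt_iff_lt_of_link (hγ : IsCut sl sl' γ) (h : Link sl sl' i j)
    (h' : Link sl sl' i' j') : i < i' ↔ j < j' := by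
  have hγi := hγ.eq_some_iff_link.2 h
  have hγi' := hγ.eq_some_iff_link.2 h'
  refine ⟨hγ.2.1 i i' j j' hγi hγi', fun hjj' => ?_⟩
  rcases lt_trichotomy i i' with hii' | rfl | hi'i
  · exact hii'
  · exact absurd (Option.some_injective _ (hγi.symm.trans hγi')) hjj'.ne
  · exact absurd (hγ.2.1 i' i j' j hγi' hγi hi'i) hjj'.not_gt

theorem left_unique_link (hγ : IsCut sl sl' γ) (h : Link sl sl' i j)
    (h' : Link sl sl' i' j) : i = i' := by
  have := hγ.lt_iff_lt_of_link h h'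
  have := hγ.lt_iff_lt_of_link h' h
  omega

theorem exists_link_of_lt_length (hγ : IsCut sl sl' γ) (he : sl[i]? = some (g, q))
    (hq : q < g.length) : ∃ j : ℕ, sl'[j]? = some (g, q + 1) := by
  obtain ⟨hi, hei⟩ := List.getElem?_eq_some_iff.1 he
  cases hγi : γ i with
  | none =>
    have := hγ.2.2.2.1 i hi hγi
    simp only [List.get_eq_getElem, hei] at this
    omega
  | some j =>
    obtain ⟨g', q', he', hj⟩ := hγ.eq_some_iff_link.1 hγi
    rw [he] at he'
    cases he'
    exact ⟨j, hj⟩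

theorem exists_link_of_ne_zero (hγ : IsCut sl sl' γ) (he : sl'[j]? = some (g, q + 1))
    (hq : q ≠ 0) : ∃ i : ℕ, sl[i]? = some (g, q) := by
  obtain ⟨hj, hej⟩ := List.getElem?_eq_some_iff.1 he
  by_cases hγj : ∃ i, γ i = some j
  · obtain ⟨i, hγi⟩ := hγj
    obtain ⟨g', q', hi, he'⟩ := hγ.eq_some_iff_link.1 hγi
    rw [he] at he'
    cases he'
    exact ⟨i, hi⟩
  · have := hγ.2.2.2.2 j hj (by simpa using hγj)
    simp only [List.get_eq_getElem, hej] at this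
    omega

end IsCut

end Cuts

section Interpolation
variable (w : ℕ → ℚ) (inh : ℕ → Option ℕ)

open Classical in
noncomputable def nextInherited (j : ℕ) : Option ℕ :=
  if h : ∃ k, j ≤ k ∧ (inh k).isSome then inh (Nat.find h) else none

/-- `interpolateAux (j + 1)` is the value at index `j`; `interpolateAux 0` lies below every
inherited value. -/
noncomputable def interpolateAux : ℕ → ℚ
  | 0 =>
    match nextInherited inh 0 with
    | some i => w i - 1
    | none => 0
  | j + 1 =>
    match inh j, nextInherited inh (j + 1) with
    | some i, _ => w i
    | none, some i => (interpolateAux j + w i) / 2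
    | none, none => interpolateAux j + 1

noncomputable def interpolate (j : ℕ) : ℚ := interpolateAux w inh (j + 1)

variable {w inh}

theorem interpolate_of_eq_some {i j : ℕ} (h : inh j = some i) : interpolate w inh j = w i := by
  simp [interpolate, interpolateAux, h]

theorem exists_of_nextInherited_eq_some {i j : ℕ} (h : nextInherited inh j = some i) :
    ∃ k, j ≤ k ∧ inh k = some i := by
  unfold nextInherited at h
  split_ifs at h with hex
  exact ⟨_, (Nat.find_spec hex).1, h⟩

variable (H : ∀ ⦃j j' i i'⦄, inh j = some i → inh j' = some i' → j < j' → w i < w i')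
include H

theorem exists_nextInherited_le {i j k : ℕ} (hjk : j ≤ k) (hk : inh k = some i) :
    ∃ i₀, nextInherited inh j = some i₀ ∧ w i₀ ≤ w i := by
  have hex : ∃ k, j ≤ k ∧ (inh k).isSome := ⟨k, hjk, by simp [hk]⟩
  obtain ⟨i₀, hi₀⟩ := Option.isSome_iff_exists.1 (Nat.find_spec hex).2
  refine ⟨i₀, by rw [nextInherited, dif_pos hex, hi₀], ?_⟩
  rcases (Nat.find_min' hex ⟨hjk, by simp [hk]⟩).lt_or_eq with hlt | heq
  · exact (H hi₀ hk hlt).le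
  · rw [heq, hk] at hi₀
    cases hi₀
    exact le_rfl

theorem interpolateAux_lt {i j k : ℕ} (hjk : j ≤ k) (hk : inh k = some i) :
    interpolateAux w inh j < w i := by
  induction j generalizing i k with
  | zero =>
    obtain ⟨i₀, h₀, hle⟩ := exists_nextInherited_le H hjk hk
    simp only [interpolateAux, h₀]
    linarith
  | succ j ih =>
    cases hj : inh j with
    | some i' => simpa [interpolateAux, hj] using H hj hk (by omega)
    | none =>
      obtain ⟨i₀, h₀, hle⟩ := exists_nextInherited_le H hjk hk
      obtain ⟨k₀, hjk₀, hk₀⟩ := exists_of_nextInherited_eq_some h₀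
      have := ih (by omega : j ≤ k₀) hk₀
      simp only [interpolateAux, hj, h₀]
      linarith

theorem interpolateAux_lt_succ (j : ℕ) :
    interpolateAux w inh j < interpolateAux w inh (j + 1) := by
  cases hj : inh j with
  | some i => simpa [interpolateAux, hj] using interpolateAux_lt H le_rfl hj
  | none =>
    cases h₀ : nextInherited inh (j + 1) with
    | some i₀ =>
      obtain ⟨k₀, hjk₀, hk₀⟩ := exists_of_nextInherited_eq_some h₀
      have := interpolateAux_lt H (by omega : j ≤ k₀) hk₀
      simp only [interpolateAux, hj, h₀]
      linarith
    | none =>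
      simp only [interpolateAux, hj, h₀]
      linarith

theorem interpolate_strictMono : StrictMono (interpolate w inh) :=
  (strictMono_nat_of_lt_succ (interpolateAux_lt_succ H)).comp (strictMono_id.add_const 1)

end Interpolation

section Heights
variable {α : Type} {σ : List (List (List α × ℕ))} {n i j : ℕ}

def HasCuts (σ : List (List (List α × ℕ))) : Prop :=
  ∀ n, n + 1 < σ.length → ∃ γ, IsCut (σ.getD n []) (σ.getD (n + 1) []) γ

theorem lt_length_of_getElem?_getD_eq_some {e : List α × ℕ}
    (h : (σ.getD n [])[i]? = some e) : n < σ.length := by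
  by_contra hn
  rw [List.getD_eq_default _ _ (not_lt.1 hn)] at h
  simp at h

theorem HasCuts.exists_isCut_of_link (hσ : HasCuts σ)
    (h : Link (σ.getD n []) (σ.getD (n + 1) []) i j) :
    ∃ γ, IsCut (σ.getD n []) (σ.getD (n + 1) []) γ := by
  obtain ⟨_, _, -, hj⟩ := h
  exact hσ n (lt_length_of_getElem?_getD_eq_some hj)

open Classical in
noncomputable def parent (σ : List (List (List α × ℕ))) (n j : ℕ) : Option ℕ :=
  if h : ∃ i, Link (σ.getD n []) (σ.getD (n + 1) []) i j then some h.choose else none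

theorem HasCuts.parent_eq_some_iff (hσ : HasCuts σ) :
    parent σ n j = some i ↔ Link (σ.getD n []) (σ.getD (n + 1) []) i j := by
  unfold parent
  split_ifs with hex
  · obtain ⟨γ, hγ⟩ := hσ.exists_isCut_of_link hex.choose_spec
    exact ⟨fun h => Option.some_injective _ h ▸ hex.choose_spec,
      fun h => congrArg some (hγ.left_unique_link hex.choose_spec h)⟩
  · exact ⟨nofun, fun h => absurd ⟨i, h⟩ hex⟩

noncomputable def height (σ : List (List (List α × ℕ))) : ℕ → ℕ → ℚ
  | 0 => Nat.cast
  | n + 1 => interpolate (height σ n) (parent σ n)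

theorem HasCuts.height_succ_of_link (hσ : HasCuts σ)
    (h : Link (σ.getD n []) (σ.getD (n + 1) []) i j) : height σ (n + 1) j = height σ n i :=
  interpolate_of_eq_some (hσ.parent_eq_some_iff.2 h)

theorem HasCuts.height_strictMono (hσ : HasCuts σ) (n : ℕ) : StrictMono (height σ n) := by
  induction n with
  | zero => exact Nat.strictMono_cast
  | succ n ih =>
    refine interpolate_strictMono fun j j' i i' hi hi' hjj' => ih ?_
    have hi := hσ.parent_eq_some_iff.1 hi
    obtain ⟨γ, hγ⟩ := hσ.exists_isCut_of_link hi
    exact (hγ.lt_iff_lt_of_link hi (hσ.parent_eq_some_iff.1 hi')).2 hjj'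

end Heights

section Threads
variable {α : Type} {σ : List (List (List α × ℕ))} {n i j d q : ℕ} {g : List α}

theorem HasCuts.exists_getElem?_succ (hσ : HasCuts σ)
    (hend : IsEndSlice (σ.getD (σ.length - 1) [])) (he : (σ.getD n [])[i]? = some (g, q))
    (hq : q < g.length) :
    ∃ j, (σ.getD (n + 1) [])[j]? = some (g, q + 1) ∧ height σ (n + 1) j = height σ n i := by
  have hn := lt_length_of_getElem?_getD_eq_some he
  have hn' : n + 1 < σ.length := by
    by_contra hn'
    have := hend _ (List.mem_of_getElem? (show n = σ.length - 1 by omega ▸ he))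
    exact hq.ne this
  obtain ⟨γ, hγ⟩ := hσ n hn'
  obtain ⟨j, hj⟩ := hγ.exists_link_of_lt_length he hq
  exact ⟨j, hj, hσ.height_succ_of_link ⟨g, q, he, hj⟩⟩

theorem HasCuts.exists_getElem?_pred (hσ : HasCuts σ)
    (he : (σ.getD (n + 1) [])[j]? = some (g, q + 1)) (hq : q ≠ 0) :
    ∃ i, (σ.getD n [])[i]? = some (g, q) ∧ height σ n i = height σ (n + 1) j := by
  obtain ⟨γ, hγ⟩ := hσ n (lt_length_of_getElem?_getD_eq_some he)
  obtain ⟨i, hi⟩ := hγ.exists_link_of_ne_zero he hq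
  exact ⟨i, hi, (hσ.height_succ_of_link ⟨g, q, hi, he⟩).symm⟩

theorem HasCuts.exists_getElem?_add (hσ : HasCuts σ)
    (hend : IsEndSlice (σ.getD (σ.length - 1) [])) (he : (σ.getD n [])[i]? = some (g, q))
    (hd : q + d ≤ g.length) :
    ∃ j, (σ.getD (n + d) [])[j]? = some (g, q + d) ∧ height σ (n + d) j = height σ n i := by
  induction d with
  | zero => exact ⟨i, he, rfl⟩
  | succ d ih =>
    obtain ⟨j, hj, hhj⟩ := ih (by omega)
    obtain ⟨j', hj', hhj'⟩ := hσ.exists_getElem?_succ hend hj (by omega)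
    exact ⟨j', hj', hhj'.trans hhj⟩

theorem HasCuts.exists_getElem?_sub (hσ : HasCuts σ)
    (he : (σ.getD (n + d) [])[j]? = some (g, q + d)) (hq : q ≠ 0) :
    ∃ i, (σ.getD n [])[i]? = some (g, q) ∧ height σ n i = height σ (n + d) j := by
  induction d generalizing j with
  | zero => exact ⟨j, he, rfl⟩
  | succ d ih =>
    obtain ⟨j', hj', hhj'⟩ := hσ.exists_getElem?_pred (n := n + d) (q := q + d) he (by omega)
    obtain ⟨i, hi, hhi⟩ := ih hj'
    exact ⟨i, hi, hhi.trans hhj'⟩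

theorem HasCuts.offset_le (hσ : HasCuts σ) (hstart : IsStartSlice (σ.getD 0 []))
    (he : (σ.getD n [])[i]? = some (g, q)) : q ≤ n + 1 := by
  by_contra! hq
  obtain ⟨i₀, hi₀, -⟩ := hσ.exists_getElem?_sub (n := 0) (d := n) (q := q - n)
    (by rwa [zero_add, Nat.sub_add_cancel (by omega)]) (by omega)
  have := hstart _ (List.mem_of_getElem? hi₀)
  omega

theorem HasCuts.exists_thread (hσ : HasCuts σ) (hstart : IsStartSlice (σ.getD 0 []))
    (hend : IsEndSlice (σ.getD (σ.length - 1) [])) (he : (σ.getD n [])[i]? = some (g, q))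
    (hq : q ≠ 0) {k : ℕ} (hk : k < g.length) :
    ∃ j, (σ.getD (n + 1 - q + k) [])[j]? = some (g, k + 1) ∧
      height σ (n + 1 - q + k) j = height σ n i := by
  have hn : n = n + 1 - q + (q - 1) := by have := hσ.offset_le hstart he; omega
  obtain ⟨i₀, hi₀, hhi₀⟩ := hσ.exists_getElem?_sub (d := q - 1) (q := 1)
    (by rwa [← hn, Nat.add_sub_cancel' (by omega)]) one_ne_zero
  obtain ⟨j, hj, hhj⟩ := hσ.exists_getElem?_add hend hi₀ (d := k) (by omega)
  rw [← hn] at hhi₀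
  exact ⟨j, by rwa [add_comm 1 k] at hj, hhj.trans hhi₀⟩

end Threads

section SliceSeq
variable {α : Type} {sim : α → α → Prop} {G : Set (List α)} {u : List α}
  {σ : List (List (List α × ℕ))} {n i q : ℕ} {g : List α}

namespace IsSliceSeq

theorem hasCuts (hσ : IsSliceSeq sim G u σ) : HasCuts σ := fun n hn =>
  hσ.2.2.1 n _ _ (by simp [show n < σ.length by omega]) (by simp [hn])

theorem isStartSlice (hσ : IsSliceSeq sim G u σ) : IsStartSlice (σ.getD 0 []) := by
  rcases σ.length.eq_zero_or_pos with h | h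
  · rw [List.length_eq_zero_iff.1 h]
    exact nofun
  · exact hσ.2.2.2.1 _ (by simp [h])

theorem isEndSlice (hσ : IsSliceSeq sim G u σ) : IsEndSlice (σ.getD (σ.length - 1) []) := by
  rcases σ.length.eq_zero_or_pos with h | h
  · rw [List.length_eq_zero_iff.1 h]
    exact nofun
  · exact hσ.2.2.2.2 _ (by simp [h])

theorem isSlice_entry (hσ : IsSliceSeq sim G u σ) (he : (σ.getD n [])[i]? = some (g, q)) :
    g ∈ G ∧ 1 ≤ q ∧ q ≤ g.length ∧
      ∃ a b, u[n]? = some a ∧ g[q - 1]? = some b ∧ sim a b := by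
  have hn := lt_length_of_getElem?_getD_eq_some he
  have hnu : n < u.length := hσ.1 ▸ hn
  obtain ⟨hg, hq, hqg, b, hb, hab⟩ :=
    hσ.2.1 n _ u[n] (by simp [hn]) (by simp [hnu]) _ (List.mem_of_getElem? he)
  exact ⟨hg, hq, hqg, _, b, List.getElem?_eq_getElem hnu, hb, hab⟩

end IsSliceSeq

end SliceSeq

section RewriteSeqOf
variable {α : Type} {sim : α → α → Prop} {G : Set (List α)} {u : List α}
  {σ : List (List (List α × ℕ))} {n i x q : ℕ} {g : List α}

def topEntries (σ : List (List (List α × ℕ))) : List (ℕ × (List α × ℕ)) :=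
  (List.range σ.length).filterMap fun n => (σ.getD n []).getLast?.map (n, ·)

def threadRewrite (e : ℕ × (List α × ℕ)) : List α × ℕ := (e.2.1, e.1 + 1 - e.2.2)

noncomputable def topHeight (σ : List (List (List α × ℕ))) (n : ℕ) : ℚ :=
  height σ n ((σ.getD n []).length - 1)

noncomputable def rewriteSeqOf (σ : List (List (List α × ℕ))) : List (List α × ℕ) :=
  ((topEntries σ).mergeSort fun a b => topHeight σ a.1 ≤ topHeight σ b.1).map threadRewrite

theorem mem_topEntries {e : ℕ × (List α × ℕ)} :
    e ∈ topEntries σ ↔ (σ.getD e.1 []).getLast? = some e.2 := by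
  simp only [topEntries, List.mem_filterMap, List.mem_range, Option.map_eq_some_iff]
  constructor
  · rintro ⟨n, -, e', he', rfl⟩
    exact he'
  · intro he
    refine ⟨e.1, ?_, e.2, he, rfl⟩
    rw [List.getLast?_eq_getElem?] at he
    exact lt_length_of_getElem?_getD_eq_some he

theorem mem_rewriteSeqOf {t : List α × ℕ} :
    t ∈ rewriteSeqOf σ ↔ ∃ e ∈ topEntries σ, threadRewrite e = t := by
  simp only [rewriteSeqOf, List.mem_map, List.mem_mergeSort]

namespace IsSliceSeq

theorem exists_getElem?_of_covers (hσ : IsSliceSeq sim G u σ)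
    (he : (σ.getD n [])[i]? = some (g, q)) (hx : Covers (threadRewrite (n, (g, q))) x) :
    ∃ j, (σ.getD x [])[j]? = some (g, x + q - n) ∧ height σ x j = height σ n i := by
  obtain ⟨-, hq, -⟩ := hσ.isSlice_entry he
  have hqn := hσ.hasCuts.offset_le hσ.isStartSlice he
  obtain ⟨hx₁, hx₂⟩ := hx
  simp only [threadRewrite] at hx₁ hx₂
  obtain ⟨j, hj, hhj⟩ := hσ.hasCuts.exists_thread hσ.isStartSlice hσ.isEndSlice he (by omega)
    (k := x - (n + 1 - q)) (by omega)
  have hcol : n + 1 - q + (x - (n + 1 - q)) = x := by omega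
  rw [hcol, show x - (n + 1 - q) + 1 = x + q - n by omega] at hj
  exact ⟨j, hj, hcol ▸ hhj⟩

theorem isRewriteSeq_rewriteSeqOf (hσ : IsSliceSeq sim G u σ) :
    IsRewriteSeq sim G u (rewriteSeqOf σ) := by
  intro t ht
  obtain ⟨⟨n, g, q⟩, he, rfl⟩ := mem_rewriteSeqOf.1 ht
  rw [mem_topEntries, List.getLast?_eq_getElem?] at he
  obtain ⟨hg, hq, hqg, -⟩ := hσ.isSlice_entry he
  have hqn := hσ.hasCuts.offset_le hσ.isStartSlice he
  have hcol : ∀ k < g.length,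
      ∃ a b, u[n + 1 - q + k]? = some a ∧ g[k]? = some b ∧ sim a b := by
    intro k hk
    obtain ⟨j, hj, -⟩ := hσ.exists_getElem?_of_covers he (x := n + 1 - q + k)
      ⟨by simp [threadRewrite], by simp only [threadRewrite]; omega⟩
    obtain ⟨-, -, -, a, b, ha, hb, hab⟩ := hσ.isSlice_entry hj
    exact ⟨a, b, ha, by rwa [show n + 1 - q + k + q - n - 1 = k by omega] at hb, hab⟩
  obtain ⟨a, -, ha, -⟩ := hcol (g.length - 1) (by omega)
  have := (List.getElem?_eq_some_iff.1 ha).1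
  exact ⟨hg, by simp only [threadRewrite]; omega, List.forall₂_take_drop_of_forall_lt hcol⟩

theorem topHeight_lt_or_threadRewrite_eq (hσ : IsSliceSeq sim G u σ)
    (hx : (σ.getD x []).getLast? = some (g, q)) {e : ℕ × (List α × ℕ)}
    (he : e ∈ topEntries σ) (hcov : Covers (threadRewrite e) x) :
    topHeight σ e.1 < topHeight σ x ∨ threadRewrite e = threadRewrite (x, (g, q)) := by
  obtain ⟨n, g', q'⟩ := e
  rw [mem_topEntries, List.getLast?_eq_getElem?] at he
  rw [List.getLast?_eq_getElem?] at hx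
  obtain ⟨-, hq', -⟩ := hσ.isSlice_entry he
  have hqn := hσ.hasCuts.offset_le hσ.isStartSlice he
  obtain ⟨j, hj, hhj⟩ := hσ.exists_getElem?_of_covers he hcov
  have hjlt := (List.getElem?_eq_some_iff.1 hj).1
  rcases (Nat.le_sub_one_of_lt hjlt).lt_or_eq with hlt | rfl
  · left
    rw [topHeight, topHeight, ← hhj]
    exact hσ.hasCuts.height_strictMono x hlt
  · right
    rw [hj, Option.some_inj, Prod.mk.injEq] at hx
    obtain ⟨rfl, rfl⟩ := hx
    obtain ⟨hx₁, -⟩ := hcov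
    simp only [threadRewrite] at hx₁ ⊢
    congr 1
    omega

theorem not_covers_of_getLast?_eq_none (hσ : IsSliceSeq sim G u σ)
    (hx : (σ.getD x []).getLast? = none) {t : List α × ℕ} (ht : t ∈ rewriteSeqOf σ) :
    ¬Covers t x := by
  intro hcov
  obtain ⟨⟨n, g, q⟩, he, rfl⟩ := mem_rewriteSeqOf.1 ht
  rw [mem_topEntries, List.getLast?_eq_getElem?] at he
  obtain ⟨j, hj, -⟩ := hσ.exists_getElem?_of_covers he hcov
  rw [List.getLast?_eq_none_iff.1 hx, List.getElem?_nil] at hj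
  exact absurd hj (Option.some_ne_none _).symm

theorem getElem?_rwYield_rewriteSeqOf (hσ : IsSliceSeq sim G u σ) (x : ℕ) :
    (rwYield u (rewriteSeqOf σ))[x]? = (seqYield u σ)[x]? := by
  have hb t (ht : t ∈ rewriteSeqOf σ) : t.2 + t.1.length ≤ u.length :=
    (hσ.isRewriteSeq_rewriteSeqOf t ht).2.1
  rw [getElem?_seqYield hσ.1]
  cases hx : (σ.getD x []).getLast? with
  | none =>
    rw [getElem?_rwYield_of_forall_not_covers hb
      fun t ht => hσ.not_covers_of_getLast?_eq_none hx ht]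
    simp only [sliceYield, hx, Option.map_id']
  | some e =>
    obtain ⟨g, q⟩ := e
    have hxe : (x, (g, q)) ∈ topEntries σ := mem_topEntries.2 hx
    have hx' := hx
    rw [List.getLast?_eq_getElem?] at hx'
    obtain ⟨-, hq, hqg, a, b, ha, hgb, -⟩ := hσ.isSlice_entry hx'
    have hqx := hσ.hasCuts.offset_le hσ.isStartSlice hx'
    rw [rewriteSeqOf, getElem?_rwYield_map_of_pairwise threadRewrite _
      (List.pairwise_mergeSort_le_comp _ _)
      (fun e he => hb _ (List.mem_map_of_mem he)) (List.mem_mergeSort.2 hxe)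
      ⟨by simp only [threadRewrite]; omega, by simp only [threadRewrite]; omega⟩
      fun e he hcov => hσ.topHeight_lt_or_threadRewrite_eq hx (List.mem_mergeSort.1 he) hcov]
    simp only [sliceYield, hx, threadRewrite, ha, show x - (x + 1 - q) = q - 1 by omega, hgb,
      Option.map_some, Option.getD_some]

end IsSliceSeq

end RewriteSeqOf

theorem sliceSeq_to_rewriteSeq_general
    {α : Type} (sim : α → α → Prop)
    (G : Set (List α)) (u : List α)
    (σ : List (List (List α × ℕ))) (hσ : IsSliceSeq sim G u σ) :
    ∃ ρ : List (List α × ℕ),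
      IsRewriteSeq sim G u ρ ∧ rwYield u ρ = seqYield u σ :=
  ⟨rewriteSeqOf σ, hσ.isRewriteSeq_rewriteSeqOf,
    List.ext_getElem? hσ.getElem?_rwYield_rewriteSeqOf⟩

/-- For every slice sequence `σ` for a string `u` there exists
a guided rewrite sequence `ρ` for `u` with `yield(ρ) = yield(σ)`. -/
theorem sliceSeq_to_rewriteSeq
    {α : Type} [Fintype α] (sim : α → α → Prop) (hsim : Equivalence sim)
    (G : Set (List α)) (hG : G.Finite) (u : List α)
    (σ : List (List (List α × ℕ))) (hσ : IsSliceSeq sim G u σ) :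
    ∃ ρ : List (List α × ℕ),
      IsRewriteSeq sim G u ρ ∧ rwYield u ρ = seqYield u σ :=
  sliceSeq_to_rewriteSeq_general sim G u σ hσ
end

section
/- Let σ be a slice sequence for a string u and let 𝒳 be its set of chunks with the ordering ≼. Then the relation ≼ on 𝒳 is reflexive and transitive. -/
/-- The set of chunks of a slice sequence `σ`: quadruples `(g, q, i, n)` where
`(g, q)` is the `i`-th guide-offset pair of the slice at (1-based) position `n`
(i.e. of `σ[n-1]` in 0-based list indexing). -/
def Chunks {α : Type} (σ : List (List (List α × ℕ))) : Set (List α × ℕ × ℕ × ℕ) :=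
  {c | ∃ (n : ℕ) (sl : List (List α × ℕ)) (i : ℕ) (hi : i < sl.length),
      1 ≤ n ∧ σ[n - 1]? = some sl ∧
      c = ((sl.get ⟨i, hi⟩).1, (sl.get ⟨i, hi⟩).2, i, n)}

/-- The ordering `≼` on chunks.  Here `γ m` (for `m ≥ 1`) denotes the cut for
the slices at 1-based positions `m` and `m + 1`.  `(g,q,i,n) ≼ (g',q',i',n')`
iff there is a zig-zag path `ℓ_0 ≤ h_0, …, ℓ_{|n'-n|} ≤ h_{|n'-n|}` through the
index sets of the intermediate slices, following the cuts from `i` to `i'`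
(upward if `n ≤ n'`, downward if `n' ≤ n`). -/
def ChunkLE {α : Type} (σ : List (List (List α × ℕ))) (γ : ℕ → ℕ → Option ℕ)
    (c c' : List α × ℕ × ℕ × ℕ) : Prop :=
  match c, c' with
  | (_, _, i, n), (_, _, i', n') =>
    (n ≤ n' ∧ ∃ ℓ h : ℕ → ℕ,
      (∀ k ≤ n' - n, ∃ sl, σ[n + k - 1]? = some sl ∧
        ℓ k < sl.length ∧ h k < sl.length ∧ ℓ k ≤ h k) ∧
      (∀ k < n' - n, γ (n + k) (h k) = some (ℓ (k + 1))) ∧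
      ℓ 0 = i ∧ h (n' - n) = i') ∨
    (n' ≤ n ∧ ∃ ℓ h : ℕ → ℕ,
      (∀ k ≤ n - n', ∃ sl, σ[n' + k - 1]? = some sl ∧
        ℓ k < sl.length ∧ h k < sl.length ∧ ℓ k ≤ h k) ∧
      (∀ k < n - n', γ (n' + k) (ℓ k) = some (h (k + 1))) ∧
      h 0 = i' ∧ ℓ (n - n') = i)

/-- The equivalence `≡` on chunks induced by the ordering `≼`. -/
def ChunkEquiv {α : Type} (σ : List (List (List α × ℕ))) (γ : ℕ → ℕ → Option ℕ)
    (c c' : List α × ℕ × ℕ × ℕ) : Prop :=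
  ChunkLE σ γ c c' ∧ ChunkLE σ γ c' c

namespace ChunkAux

variable {α : Type}

/-- Upward zig-zag path: first disjunct of `ChunkLE`. -/
def UpP (σ : List (List (List α × ℕ))) (γ : ℕ → ℕ → Option ℕ) (n n' i i' : ℕ) : Prop :=
  n ≤ n' ∧ ∃ ℓ h : ℕ → ℕ,
    (∀ k ≤ n' - n, ∃ sl, σ[n + k - 1]? = some sl ∧
      ℓ k < sl.length ∧ h k < sl.length ∧ ℓ k ≤ h k) ∧
    (∀ k < n' - n, γ (n + k) (h k) = some (ℓ (k + 1))) ∧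
    ℓ 0 = i ∧ h (n' - n) = i'

/-- Downward zig-zag path: second disjunct of `ChunkLE`. -/
def DownP (σ : List (List (List α × ℕ))) (γ : ℕ → ℕ → Option ℕ) (n n' i i' : ℕ) : Prop :=
  n' ≤ n ∧ ∃ ℓ h : ℕ → ℕ,
    (∀ k ≤ n - n', ∃ sl, σ[n' + k - 1]? = some sl ∧
      ℓ k < sl.length ∧ h k < sl.length ∧ ℓ k ≤ h k) ∧
    (∀ k < n - n', γ (n' + k) (ℓ k) = some (h (k + 1))) ∧
    h 0 = i' ∧ ℓ (n - n') = i

/-- Strict monotonicity of the cuts (wherever the neighbouring slices exist). -/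
def Mono (σ : List (List (List α × ℕ))) (γ : ℕ → ℕ → Option ℕ) : Prop :=
  ∀ t i₁ i₂ j₁ j₂, 1 ≤ t → (∃ s, σ[t - 1]? = some s) → (∃ s, σ[t]? = some s) →
    γ t i₁ = some j₁ → γ t i₂ = some j₂ → i₁ < i₂ → j₁ < j₂

theorem chunkLE_iff (σ : List (List (List α × ℕ))) (γ : ℕ → ℕ → Option ℕ)
    (g g' : List α) (q q' i n i' n' : ℕ) :
    ChunkLE σ γ (g, q, i, n) (g', q', i', n') ↔
      UpP σ γ n n' i i' ∨ DownP σ γ n n' i i' := Iff.rfl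

theorem upP_trans {σ : List (List (List α × ℕ))} {γ : ℕ → ℕ → Option ℕ}
    {n m p ix iy iz : ℕ}
    (h1 : UpP σ γ n m ix iy) (h2 : UpP σ γ m p iy iz) : UpP σ γ n p ix iz := by
  obtain ⟨hnm, ℓA, hA, HA1, HA2, HA3, HA4⟩ := h1
  obtain ⟨hmp, ℓB, hB, HB1, HB2, HB3, HB4⟩ := h2
  refine ⟨le_trans hnm hmp,
    fun k => if k ≤ m - n then ℓA k else ℓB (k - (m - n)),
    fun k => if k < m - n then hA k else hB (k - (m - n)), ?_, ?_, ?_, ?_⟩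
  · intro k hk
    rcases lt_trichotomy k (m - n) with hc | hc | hc
    · obtain ⟨sl, e1, e2, e3, e4⟩ := HA1 k (le_of_lt hc)
      refine ⟨_, e1, ?_⟩
      simp only [if_pos (le_of_lt hc), if_pos hc]
      exact ⟨e2, e3, e4⟩
    · subst hc
      obtain ⟨sl, e1, e2, e3, e4⟩ := HA1 (m - n) le_rfl
      obtain ⟨sl', f1, f2, f3, f4⟩ := HB1 0 (Nat.zero_le _)
      have eidx : m + 0 - 1 = n + (m - n) - 1 := by omega
      rw [eidx, e1] at f1
      obtain rfl : sl' = sl := Option.some.inj f1.symm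
      refine ⟨_, e1, ?_⟩
      simp only [if_pos (le_refl (m - n)), if_neg (lt_irrefl (m - n)), Nat.sub_self]
      refine ⟨e2, f3, ?_⟩
      calc ℓA (m - n) ≤ hA (m - n) := e4
        _ = ℓB 0 := by rw [HA4, HB3]
        _ ≤ hB 0 := f4
    · obtain ⟨sl, e1, e2, e3, e4⟩ := HB1 (k - (m - n)) (by omega)
      have eidx : m + (k - (m - n)) - 1 = n + k - 1 := by omega
      rw [eidx] at e1
      refine ⟨_, e1, ?_⟩
      simp only [if_neg (by omega : ¬ k ≤ m - n), if_neg (by omega : ¬ k < m - n)]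
      exact ⟨e2, e3, e4⟩
  · intro k hk
    by_cases hc : k < m - n
    · simp only [if_pos hc, if_pos (by omega : k + 1 ≤ m - n)]
      exact HA2 k hc
    · simp only [if_neg hc, if_neg (by omega : ¬ k + 1 ≤ m - n)]
      have := HB2 (k - (m - n)) (by omega)
      have e1 : m + (k - (m - n)) = n + k := by omega
      have e2 : k - (m - n) + 1 = k + 1 - (m - n) := by omega
      rw [e1, e2] at this
      exact this
  · simp only [if_pos (Nat.zero_le _)]; exact HA3
  · simp only [if_neg (by omega : ¬ p - n < m - n)]
    have e : p - n - (m - n) = p - m := by omega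
    rw [e]; exact HB4

theorem downP_trans {σ : List (List (List α × ℕ))} {γ : ℕ → ℕ → Option ℕ}
    {n m p ix iy iz : ℕ}
    (h1 : DownP σ γ n m ix iy) (h2 : DownP σ γ m p iy iz) : DownP σ γ n p ix iz := by
  obtain ⟨hmn, ℓA, hA, HA1, HA2, HA3, HA4⟩ := h1
  obtain ⟨hpm, ℓB, hB, HB1, HB2, HB3, HB4⟩ := h2
  refine ⟨le_trans hpm hmn,
    fun k => if k < m - p then ℓB k else ℓA (k - (m - p)),
    fun k => if k ≤ m - p then hB k else hA (k - (m - p)), ?_, ?_, ?_, ?_⟩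
  · intro k hk
    rcases lt_trichotomy k (m - p) with hc | hc | hc
    · obtain ⟨sl, e1, e2, e3, e4⟩ := HB1 k (le_of_lt hc)
      refine ⟨_, e1, ?_⟩
      simp only [if_pos hc, if_pos (le_of_lt hc)]
      exact ⟨e2, e3, e4⟩
    · subst hc
      obtain ⟨sl, e1, e2, e3, e4⟩ := HB1 (m - p) le_rfl
      obtain ⟨sl', f1, f2, f3, f4⟩ := HA1 0 (Nat.zero_le _)
      have eidx : m + 0 - 1 = p + (m - p) - 1 := by omega
      rw [eidx, e1] at f1
      obtain rfl : sl' = sl := Option.some.inj f1.symm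
      refine ⟨_, e1, ?_⟩
      simp only [if_neg (lt_irrefl (m - p)), if_pos (le_refl (m - p)), Nat.sub_self]
      refine ⟨f2, e3, ?_⟩
      calc ℓA 0 ≤ hA 0 := f4
        _ = ℓB (m - p) := by rw [HA3, HB4]
        _ ≤ hB (m - p) := e4
    · obtain ⟨sl, e1, e2, e3, e4⟩ := HA1 (k - (m - p)) (by omega)
      have eidx : m + (k - (m - p)) - 1 = p + k - 1 := by omega
      rw [eidx] at e1
      refine ⟨_, e1, ?_⟩
      simp only [if_neg (by omega : ¬ k < m - p), if_neg (by omega : ¬ k ≤ m - p)]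
      exact ⟨e2, e3, e4⟩
  · intro k hk
    by_cases hc : k < m - p
    · simp only [if_pos hc, if_pos (by omega : k + 1 ≤ m - p)]
      exact HB2 k hc
    · simp only [if_neg hc, if_neg (by omega : ¬ k + 1 ≤ m - p)]
      have := HA2 (k - (m - p)) (by omega)
      have e1 : m + (k - (m - p)) = p + k := by omega
      have e2 : k - (m - p) + 1 = k + 1 - (m - p) := by omega
      rw [e1, e2] at this
      exact this
  · simp only [if_pos (Nat.zero_le _)]; exact HB3
  · simp only [if_neg (by omega : ¬ n - p < m - p)]
    have e : n - p - (m - p) = n - m := by omega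
    rw [e]; exact HA4

theorem upP_downP {σ : List (List (List α × ℕ))} {γ : ℕ → ℕ → Option ℕ}
    {n m p ix iy iz : ℕ} (hn : 1 ≤ n) (hp : 1 ≤ p) (Hm : Mono σ γ)
    (h1 : UpP σ γ n m ix iy) (h2 : DownP σ γ m p iy iz) :
    UpP σ γ n p ix iz ∨ DownP σ γ n p ix iz := by
  obtain ⟨hnm, ℓA, hA, HA1, HA2, HA3, HA4⟩ := h1
  obtain ⟨hpm, ℓB, hB, HB1, HB2, HB3, HB4⟩ := h2
  rcases le_total n p with hnp | hpn
  · -- upward result; key claim: ℓA (m-n-d) ≤ hB (m-p-d) for d ≤ m - p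
    have key : ∀ d, d ≤ m - p → ℓA (m - n - d) ≤ hB (m - p - d) := by
      intro d
      induction d with
      | zero =>
        intro _
        obtain ⟨sl, e1, e2, e3, e4⟩ := HA1 (m - n) le_rfl
        obtain ⟨sl', f1, f2, f3, f4⟩ := HB1 (m - p) le_rfl
        simp only [Nat.sub_zero]
        calc ℓA (m - n) ≤ hA (m - n) := e4
          _ = ℓB (m - p) := by rw [HA4, HB4]
          _ ≤ hB (m - p) := f4
      | succ d ih =>
        intro hd
        by_contra hcon
        push_neg at hcon
        set k₁ := m - n - (d + 1) with hk₁
        set k₂ := m - p - (d + 1) with hk₂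
        have c1 : γ (n + k₁) (hA k₁) = some (ℓA (k₁ + 1)) := HA2 k₁ (by omega)
        have c2 : γ (p + k₂) (ℓB k₂) = some (hB (k₂ + 1)) := HB2 k₂ (by omega)
        have elev : p + k₂ = n + k₁ := by omega
        rw [elev] at c2
        obtain ⟨sl, e1, e2, e3, e4⟩ := HA1 k₁ (by omega)
        obtain ⟨sl', f1, f2, f3, f4⟩ := HA1 (k₁ + 1) (by omega)
        have eidx : n + (k₁ + 1) - 1 = n + k₁ := by omega
        rw [eidx] at f1
        obtain ⟨sl₂, g1, g2, g3, g4⟩ := HB1 k₂ (by omega)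
        have hlt : ℓB k₂ < hA k₁ := lt_of_le_of_lt g4 (lt_of_lt_of_le hcon e4)
        have := Hm (n + k₁) (ℓB k₂) (hA k₁) _ _ (by omega) ⟨sl, e1⟩ ⟨sl', f1⟩ c2 c1 hlt
        -- this : hB (k₂ + 1) < ℓA (k₁ + 1)
        have ihd := ih (by omega)
        have e5 : k₁ + 1 = m - n - d := by omega
        have e6 : k₂ + 1 = m - p - d := by omega
        rw [e5, e6] at this
        omega
    left
    have hkey := key (m - p) le_rfl
    simp only [Nat.sub_self] at hkey
    have e7 : m - n - (m - p) = p - n := by omega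
    rw [e7, HB3] at hkey
    refine ⟨hnp, ℓA, fun k => if k = p - n then iz else hA k, ?_, ?_, HA3, ?_⟩
    · intro k hk
      by_cases hc : k = p - n
      · subst hc
        obtain ⟨sl, e1, e2, e3, e4⟩ := HA1 (p - n) (by omega)
        obtain ⟨sl', f1, f2, f3, f4⟩ := HB1 0 (Nat.zero_le _)
        have eidx : p + 0 - 1 = n + (p - n) - 1 := by omega
        rw [eidx, e1] at f1
        obtain rfl : sl' = sl := Option.some.inj f1.symm
        refine ⟨_, e1, e2, ?_, ?_⟩
        · simp; rw [← HB3]; exact f3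
        · simpa using hkey
      · obtain ⟨sl, e1, e2, e3, e4⟩ := HA1 k (by omega)
        refine ⟨_, e1, e2, ?_, ?_⟩ <;> simp only [if_neg hc]
        · exact e3
        · exact e4
    · intro k hk
      simp only [if_neg (by omega : ¬ k = p - n)]
      exact HA2 k (by omega)
    · simp
  · -- downward result; key claim: hA (m-n-d) ≤ hB (m-p-d) for d ≤ m - n
    have key : ∀ d, d ≤ m - n → hA (m - n - d) ≤ hB (m - p - d) := by
      intro d
      induction d with
      | zero =>
        intro _
        obtain ⟨sl', f1, f2, f3, f4⟩ := HB1 (m - p) le_rfl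
        simp only [Nat.sub_zero]
        calc hA (m - n) = ℓB (m - p) := by rw [HA4, HB4]
          _ ≤ hB (m - p) := f4
      | succ d ih =>
        intro hd
        by_contra hcon
        push_neg at hcon
        set k₁ := m - n - (d + 1) with hk₁
        set k₂ := m - p - (d + 1) with hk₂
        have c1 : γ (n + k₁) (hA k₁) = some (ℓA (k₁ + 1)) := HA2 k₁ (by omega)
        have c2 : γ (p + k₂) (ℓB k₂) = some (hB (k₂ + 1)) := HB2 k₂ (by omega)
        have elev : p + k₂ = n + k₁ := by omega
        rw [elev] at c2
        obtain ⟨sl, e1, e2, e3, e4⟩ := HA1 k₁ (by omega)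
        obtain ⟨sl', f1, f2, f3, f4⟩ := HA1 (k₁ + 1) (by omega)
        have eidx : n + (k₁ + 1) - 1 = n + k₁ := by omega
        rw [eidx] at f1
        obtain ⟨sl₂, g1, g2, g3, g4⟩ := HB1 k₂ (by omega)
        have hlt : ℓB k₂ < hA k₁ := lt_of_le_of_lt g4 hcon
        have := Hm (n + k₁) (ℓB k₂) (hA k₁) _ _ (by omega) ⟨sl, e1⟩ ⟨sl', f1⟩ c2 c1 hlt
        have ihd := ih (by omega)
        have e5 : k₁ + 1 = m - n - d := by omega
        have e6 : k₂ + 1 = m - p - d := by omega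
        rw [e5, e6] at this
        rw [e5] at f4
        omega
    right
    have hkey := key (m - n) le_rfl
    simp only [Nat.sub_self] at hkey
    have e7 : m - p - (m - n) = n - p := by omega
    rw [e7] at hkey
    -- hkey : hA 0 ≤ hB (n - p)
    refine ⟨hpn, fun k => if k = n - p then ix else ℓB k, hB, ?_, ?_, HB3, ?_⟩
    · intro k hk
      by_cases hc : k = n - p
      · subst hc
        obtain ⟨sl, e1, e2, e3, e4⟩ := HB1 (n - p) (by omega)
        obtain ⟨sl', f1, f2, f3, f4⟩ := HA1 0 (Nat.zero_le _)
        have eidx : n + 0 - 1 = p + (n - p) - 1 := by omega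
        rw [eidx, e1] at f1
        obtain rfl : sl' = sl := Option.some.inj f1.symm
        refine ⟨_, e1, ?_, e3, ?_⟩
        · simp; rw [← HA3]; exact f2
        · simp
          calc ix = ℓA 0 := HA3.symm
            _ ≤ hA 0 := f4
            _ ≤ hB (n - p) := hkey
      · obtain ⟨sl, e1, e2, e3, e4⟩ := HB1 k (by omega)
        refine ⟨_, e1, ?_, e3, ?_⟩ <;> simp only [if_neg hc]
        · exact e2
        · exact e4
    · intro k hk
      simp only [if_neg (by omega : ¬ k = n - p)]
      exact HB2 k (by omega)
    · simp

theorem downP_upP {σ : List (List (List α × ℕ))} {γ : ℕ → ℕ → Option ℕ}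
    {n m p ix iy iz : ℕ} (hm : 1 ≤ m) (Hm : Mono σ γ)
    (h1 : DownP σ γ n m ix iy) (h2 : UpP σ γ m p iy iz) :
    UpP σ γ n p ix iz ∨ DownP σ γ n p ix iz := by
  obtain ⟨hmn, ℓA, hA, HA1, HA2, HA3, HA4⟩ := h1
  obtain ⟨hmp, ℓB, hB, HB1, HB2, HB3, HB4⟩ := h2
  have key : ∀ k, k ≤ n - m → k ≤ p - m → ℓA k ≤ hB k := by
    intro k
    induction k with
    | zero =>
      intro _ _
      obtain ⟨sl, e1, e2, e3, e4⟩ := HA1 0 (Nat.zero_le _)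
      obtain ⟨sl', f1, f2, f3, f4⟩ := HB1 0 (Nat.zero_le _)
      calc ℓA 0 ≤ hA 0 := e4
        _ = ℓB 0 := by rw [HA3, HB3]
        _ ≤ hB 0 := f4
    | succ k ih =>
      intro h1' h2'
      have c1 : γ (m + k) (ℓA k) = some (hA (k + 1)) := HA2 k (by omega)
      have c2 : γ (m + k) (hB k) = some (ℓB (k + 1)) := HB2 k (by omega)
      obtain ⟨sl, e1, e2, e3, e4⟩ := HA1 k (by omega)
      obtain ⟨sl', f1, f2, f3, f4⟩ := HA1 (k + 1) (by omega)
      have eidx : m + (k + 1) - 1 = m + k := by omega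
      rw [eidx] at f1
      obtain ⟨sl₂, g1, g2, g3, g4⟩ := HB1 (k + 1) (by omega)
      rcases lt_or_eq_of_le (ih (by omega) (by omega)) with hlt | heq
      · have := Hm (m + k) (ℓA k) (hB k) _ _ (by omega) ⟨sl, e1⟩ ⟨sl', f1⟩ c1 c2 hlt
        obtain ⟨sl₃, g1', g2', g3', g4'⟩ := HB1 (k + 1) (by omega)
        calc ℓA (k + 1) ≤ hA (k + 1) := f4
          _ ≤ ℓB (k + 1) := le_of_lt this
          _ ≤ hB (k + 1) := g4
      · rw [heq] at c1
        have := Option.some.inj (c1.symm.trans c2)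
        calc ℓA (k + 1) ≤ hA (k + 1) := f4
          _ = ℓB (k + 1) := this
          _ ≤ hB (k + 1) := g4
  rcases le_total n p with hnp | hpn
  · left
    have hkey : ℓA (n - m) ≤ hB (n - m) := key (n - m) le_rfl (by omega)
    rw [HA4] at hkey
    refine ⟨hnp, fun k => if k = 0 then ix else ℓB (n - m + k),
      fun k => hB (n - m + k), ?_, ?_, ?_, ?_⟩
    · intro k hk
      obtain ⟨sl, e1, e2, e3, e4⟩ := HB1 (n - m + k) (by omega)
      have eidx : m + (n - m + k) - 1 = n + k - 1 := by omega
      rw [eidx] at e1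
      by_cases hc : k = 0
      · subst hc
        refine ⟨_, e1, ?_, e3, ?_⟩
        · simp
          obtain ⟨sl', f1, f2, f3, f4⟩ := HA1 (n - m) le_rfl
          have eidx2 : m + (n - m) - 1 = n + 0 - 1 := by omega
          rw [eidx2, e1] at f1
          obtain rfl : sl' = sl := Option.some.inj f1.symm
          rw [← HA4]; exact f2
        · simpa using hkey
      · refine ⟨_, e1, ?_, e3, ?_⟩ <;> simp only [if_neg hc]
        · exact e2
        · exact e4
    · intro k hk
      simp only [if_neg (by omega : ¬ k + 1 = 0)]
      have := HB2 (n - m + k) (by omega)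
      have e1 : m + (n - m + k) = n + k := by omega
      have e2 : n - m + k + 1 = n - m + (k + 1) := by omega
      rw [e1, e2] at this
      exact this
    · simp
    · beta_reduce
      have e : n - m + (p - n) = p - m := by omega
      rw [e]; exact HB4
  · right
    have hkey : ℓA (p - m) ≤ hB (p - m) := key (p - m) (by omega) le_rfl
    rw [HB4] at hkey
    refine ⟨hpn, fun k => ℓA (p - m + k),
      fun k => if k = 0 then iz else hA (p - m + k), ?_, ?_, ?_, ?_⟩
    · intro k hk
      obtain ⟨sl, e1, e2, e3, e4⟩ := HA1 (p - m + k) (by omega)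
      have eidx : m + (p - m + k) - 1 = p + k - 1 := by omega
      rw [eidx] at e1
      by_cases hc : k = 0
      · subst hc
        refine ⟨_, e1, ?_, ?_, ?_⟩
        · beta_reduce
          have e : p - m + 0 = p - m := by omega
          rw [e] at e2; exact e2
        · simp
          obtain ⟨sl', f1, f2, f3, f4⟩ := HB1 (p - m) le_rfl
          have eidx2 : m + (p - m) - 1 = p + 0 - 1 := by omega
          rw [eidx2, e1] at f1
          obtain rfl : sl' = sl := Option.some.inj f1.symm
          rw [← HB4]; exact f3
        · simpa using hkey
      · refine ⟨_, e1, e2, ?_, ?_⟩ <;> simp only [if_neg hc]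
        · exact e3
        · exact e4
    · intro k hk
      simp only [if_neg (by omega : ¬ k + 1 = 0)]
      have := HA2 (p - m + k) (by omega)
      have e1 : m + (p - m + k) = p + k := by omega
      have e2 : p - m + k + 1 = p - m + (k + 1) := by omega
      rw [e1, e2] at this
      exact this
    · simp
    · beta_reduce
      have e : p - m + (n - p) = n - m := by omega
      rw [e]; exact HA4

end ChunkAux

/-- For a slice sequence `σ` for `u` with cuts `γ`, the
ordering `≼` on the set of chunks of `σ` is reflexive and transitive. -/
theorem chunkLE_refl_trans
    {α : Type} [Fintype α] (sim : α → α → Prop) (hsim : Equivalence sim)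
    (G : Set (List α)) (hG : G.Finite) (u : List α)
    (σ : List (List (List α × ℕ))) (hσ : IsSliceSeq sim G u σ)
    (γ : ℕ → ℕ → Option ℕ)
    (hγ : ∀ (n : ℕ) (sl sl' : List (List α × ℕ)),
      σ[n]? = some sl → σ[n + 1]? = some sl' → IsCut sl sl' (γ (n + 1))) :
    (∀ x ∈ Chunks σ, ChunkLE σ γ x x) ∧
    (∀ x ∈ Chunks σ, ∀ y ∈ Chunks σ, ∀ z ∈ Chunks σ,
      ChunkLE σ γ x y → ChunkLE σ γ y z → ChunkLE σ γ x z) := by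
  classical
  have Hm : ChunkAux.Mono σ γ := by
    intro t i₁ i₂ j₁ j₂ ht ⟨s1, hs1⟩ ⟨s2, hs2⟩ h1 h2 hlt
    obtain ⟨t', rfl⟩ : ∃ t', t = t' + 1 := ⟨t - 1, by omega⟩
    have hs1' : σ[t']? = some s1 := by
      have e : t' + 1 - 1 = t' := by omega
      rw [e] at hs1; exact hs1
    exact (hγ t' s1 s2 hs1' hs2).2.1 i₁ i₂ j₁ j₂ h1 h2 hlt
  have hmem : ∀ c ∈ Chunks σ, ∃ sl, 1 ≤ c.2.2.2 ∧ σ[c.2.2.2 - 1]? = some sl ∧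
      c.2.2.1 < sl.length := by
    rintro c ⟨n, sl, i, hi, hn, hsl, rfl⟩
    exact ⟨sl, hn, hsl, hi⟩
  constructor
  · rintro ⟨g, q, i, n⟩ hx
    obtain ⟨sl, hn, hsl, hi⟩ := hmem _ hx
    refine (ChunkAux.chunkLE_iff σ γ g g q q i n i n).mpr
      (Or.inl ⟨le_rfl, fun _ => i, fun _ => i, ?_, ?_, rfl, rfl⟩)
    · intro k hk
      have : k = 0 := by omega
      subst this
      exact ⟨sl, by simpa using hsl, hi, hi, le_rfl⟩
    · intro k hk; omega
  · rintro ⟨gx, qx, ix, nx⟩ hx ⟨gy, qy, iy, ny⟩ hy ⟨gz, qz, iz, nz⟩ hz hxy hyz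
    obtain ⟨slx, hnx, -, -⟩ := hmem _ hx
    obtain ⟨sly, hny, -, -⟩ := hmem _ hy
    obtain ⟨slz, hnz, -, -⟩ := hmem _ hz
    rw [ChunkAux.chunkLE_iff] at hxy hyz ⊢
    rcases hxy with h1 | h1 <;> rcases hyz with h2 | h2
    · exact Or.inl (ChunkAux.upP_trans h1 h2)
    · exact ChunkAux.upP_downP hnx hnz Hm h1 h2
    · exact ChunkAux.downP_upP hny Hm h1 h2
    · exact Or.inr (ChunkAux.downP_trans h1 h2)
end

section
/- Let σ = (sl_n)_{n=1}^{|u|} be a slice sequence for a string u, 𝒳 its set of chunks and ≡ the equivalence induced by the ordering ≼ on chunks. Let x = (g, q, i, n) ∈ 𝒳 and put p = n − q. Then there exist indexes j_1 ∈ I_{p+1}, …, j_{|g|} ∈ I_{p+|g|} such that the equivalence class of x is [x] = { (g, s, j_s, p+s) | 1 ≤ s ≤ |g| }. -/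
def PartialStrictMono (f : ℕ → Option ℕ) : Prop :=
  ∀ ⦃a b c d : ℕ⦄, f a = some c → f b = some d → a < b → c < d

namespace PartialStrictMono

variable {f : ℕ → Option ℕ} {a b c d : ℕ}

theorem le_of_le (hf : PartialStrictMono f) (ha : f a = some c) (hb : f b = some d)
    (hab : a ≤ b) : c ≤ d := by
  rcases hab.lt_or_eq with h | rfl
  · exact (hf ha hb h).le
  · exact (Option.some.inj (ha.symm.trans hb)).le

theorem le_of_image_le (hf : PartialStrictMono f) (ha : f a = some c) (hb : f b = some d)
    (hcd : c ≤ d) : a ≤ b :=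
  not_lt.mp fun hba => (hf hb ha hba).not_ge hcd

theorem inj (hf : PartialStrictMono f) (ha : f a = some c) (hb : f b = some c) : a = b :=
  le_antisymm (hf.le_of_image_le ha hb le_rfl) (hf.le_of_image_le hb ha le_rfl)

end PartialStrictMono

theorem IsCut.partialStrictMono {α : Type} {sl sl' : List (List α × ℕ)} {f : ℕ → Option ℕ}
    (hc : IsCut sl sl' f) : PartialStrictMono f :=
  fun a b c d => hc.2.1 a b c d

def cutPath (f : ℕ → ℕ → Option ℕ) (m i : ℕ) : ℕ → Option ℕ
  | 0 => some i
  | N + 1 => (cutPath f m i N).bind (f (m + N))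

section CutPath

variable {f : ℕ → ℕ → Option ℕ} {m i j k : ℕ}

theorem cutPath_add (f : ℕ → ℕ → Option ℕ) (m i a b : ℕ) :
    cutPath f m i (a + b) = (cutPath f m i a).bind (fun j => cutPath f (m + a) j b) := by
  induction b with
  | zero => cases cutPath f m i a <;> rfl
  | succ b ih =>
    rw [← add_assoc, cutPath, ih, Option.bind_assoc]
    simp only [cutPath, add_assoc]

theorem cutPath_add_eq_some {a b : ℕ} (h : cutPath f m i (a + b) = some k) :
    ∃ j, cutPath f m i a = some j ∧ cutPath f (m + a) j b = some k := by
  rwa [cutPath_add, Option.bind_eq_some_iff] at h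

theorem cutPath_add_of_eq_some {a b : ℕ} (h : cutPath f m i a = some j) :
    cutPath f m i (a + b) = cutPath f (m + a) j b := by
  rw [cutPath_add, h, Option.bind_some]

/-- Two zig-zag paths between the same endpoints, one turning right and one turning left at
every level, squeeze each other onto a single path of cuts, by monotonicity going up and
injectivity coming back down. -/
theorem cutPath_eq_of_zigzag {N : ℕ} (hf : ∀ k < N, PartialStrictMono (f (m + k)))
    {ℓ h ℓ' h' : ℕ → ℕ} (hlh : ∀ k ≤ N, ℓ k ≤ h k) (hlh' : ∀ k ≤ N, ℓ' k ≤ h' k)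
    (hup : ∀ k < N, f (m + k) (h k) = some (ℓ (k + 1)))
    (hup' : ∀ k < N, f (m + k) (ℓ' k) = some (h' (k + 1)))
    (h0 : h' 0 = ℓ 0) (hN : h N = ℓ' N) :
    cutPath f m (ℓ 0) N = some (h N) := by
  have below : ∀ k ≤ N, h' k ≤ ℓ k := by
    intro k
    induction k with
    | zero => exact fun _ => h0.le
    | succ k ih =>
      intro hk
      exact (hf k hk).le_of_le (hup' k hk) (hup k hk)
        ((hlh' k (by omega)).trans ((ih (by omega)).trans (hlh k (by omega))))
  have above : ∀ d ≤ N, h (N - d) ≤ ℓ' (N - d) := by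
    intro d
    induction d with
    | zero => exact fun _ => hN.le
    | succ d ih =>
      intro hd
      have hk : N - (d + 1) + 1 = N - d := by omega
      have hnext : ℓ (N - d) ≤ h' (N - d) :=
        (hlh _ (by omega)).trans ((ih (by omega)).trans (hlh' _ (by omega)))
      rw [← hk] at hnext
      exact (hf _ (by omega)).le_of_image_le (hup _ (by omega)) (hup' _ (by omega)) hnext
  have straight : ∀ k ≤ N, ℓ k = h k := by
    intro k hk
    have := above (N - k) (by omega)
    rw [Nat.sub_sub_self hk] at this
    exact le_antisymm (hlh k hk)
      (this.trans ((hlh' k hk).trans (below k hk)))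
  have chain : ∀ k ≤ N, cutPath f m (ℓ 0) k = some (ℓ k) := by
    intro k
    induction k with
    | zero => exact fun _ => rfl
    | succ k ih =>
      intro hk
      rw [cutPath, ih (by omega), Option.bind_some, straight k (by omega)]
      exact hup k hk
  rw [chain N le_rfl, straight N le_rfl]

end CutPath

def IsCutFamily {α : Type} (σ : List (List (List α × ℕ))) (γ : ℕ → ℕ → Option ℕ) : Prop :=
  ∀ (n : ℕ) (sl sl' : List (List α × ℕ)),
    σ[n]? = some sl → σ[n + 1]? = some sl' → IsCut sl sl' (γ (n + 1))

def ChunkAt {α : Type} (σ : List (List (List α × ℕ))) (m k : ℕ) (g : List α) (r : ℕ) : Prop :=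
  ∃ (sl : List (List α × ℕ)) (hk : k < sl.length), σ[m - 1]? = some sl ∧ sl.get ⟨k, hk⟩ = (g, r)

section Chunks

variable {α : Type} {sim : α → α → Prop} {G : Set (List α)} {u : List α}
  {σ : List (List (List α × ℕ))} {γ : ℕ → ℕ → Option ℕ}
  {g g' : List α} {m n n' k k' i i' q q' r r' N : ℕ}

theorem mem_chunks_iff : (g, q, i, n) ∈ Chunks σ ↔ 1 ≤ n ∧ ChunkAt σ n i g q := by
  constructor
  · rintro ⟨n, sl, i, hi, hn, hsl, heq⟩
    simp only [Prod.mk.injEq] at heq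
    obtain ⟨rfl, rfl, rfl, rfl⟩ := heq
    exact ⟨hn, sl, hi, hsl, rfl⟩
  · rintro ⟨hn, sl, hi, hsl, hget⟩
    exact ⟨n, sl, i, hi, hn, hsl, by rw [hget]⟩

theorem ChunkAt.unique (h : ChunkAt σ m k g r) (h' : ChunkAt σ m k g' r') :
    g = g' ∧ r = r' := by
  obtain ⟨sl, hk, hsl, hget⟩ := h
  obtain ⟨sl', hk', hsl', hget'⟩ := h'
  obtain rfl : sl = sl' := Option.some.inj (hsl.symm.trans hsl')
  exact Prod.mk.inj (hget.symm.trans hget')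

theorem ChunkAt.lt_length (h : ChunkAt σ m k g r) : m - 1 < σ.length := by
  obtain ⟨sl, -, hsl, -⟩ := h
  exact (List.getElem?_eq_some_iff.mp hsl).1

theorem IsCutFamily.isCut (hγ : IsCutFamily σ γ) (hm : 1 ≤ m)
    {sl sl' : List (List α × ℕ)} (h : σ[m - 1]? = some sl) (h' : σ[m]? = some sl') :
    IsCut sl sl' (γ m) := by
  obtain ⟨m, rfl⟩ := Nat.exists_eq_add_of_le' hm
  exact hγ m sl sl' h h'

theorem IsCutFamily.partialStrictMono (hγ : IsCutFamily σ γ) (hm : 1 ≤ m)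
    (hlen : m < σ.length) : PartialStrictMono (γ m) :=
  (hγ.isCut hm (List.getElem?_eq_getElem (by omega))
    (List.getElem?_eq_getElem hlen)).partialStrictMono

theorem ChunkAt.of_cut (hγ : IsCutFamily σ γ) (h : ChunkAt σ m k g r) (hm : 1 ≤ m)
    (hlen : m < σ.length) (hk : γ m k = some k') : ChunkAt σ (m + 1) k' g (r + 1) := by
  obtain ⟨sl, hkl, hsl, hget⟩ := h
  have hsl' := List.getElem?_eq_getElem hlen
  have hc := hγ.isCut hm hsl hsl'
  have hk'l := (hc.1 k k' hk).2
  have hiff := (hc.2.2.1 k hkl k' hk'l).mp hk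
  rw [hget] at hiff
  exact ⟨_, hk'l, hsl', Prod.ext hiff.1.symm hiff.2.symm⟩

theorem ChunkAt.of_cutPath (hγ : IsCutFamily σ γ) (h : ChunkAt σ m k g r) (hm : 1 ≤ m)
    (hlen : m + N ≤ σ.length) (hp : cutPath γ m k N = some k') :
    ChunkAt σ (m + N) k' g (r + N) := by
  induction N generalizing k' with
  | zero => exact Option.some.inj hp ▸ h
  | succ N ih =>
    obtain ⟨j, hj, hjk⟩ := Option.bind_eq_some_iff.mp hp
    replace hjk : γ (m + N) j = some k' := hjk
    exact (ih (by omega) hj).of_cut hγ (m := m + N) (by omega) (by omega) hjk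

theorem cutPath_inj (hγ : IsCutFamily σ γ) (hm : 1 ≤ m) (hlen : m + N ≤ σ.length)
    {a b c : ℕ} (ha : cutPath γ m a N = some c) (hb : cutPath γ m b N = some c) : a = b := by
  induction N generalizing c with
  | zero => exact (Option.some.inj ha).trans (Option.some.inj hb).symm
  | succ N ih =>
    obtain ⟨a', ha', hac⟩ := Option.bind_eq_some_iff.mp ha
    obtain ⟨b', hb', hbc⟩ := Option.bind_eq_some_iff.mp hb
    replace hac : γ (m + N) a' = some c := hac
    replace hbc : γ (m + N) b' = some c := hbc
    obtain rfl := (hγ.partialStrictMono (by omega) (by omega)).inj hac hbc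
    exact ih (by omega) ha' hb'

theorem ChunkLE.index_le (h : ChunkLE σ γ (g, q, i, n) (g', q', i', n)) : i ≤ i' := by
  rcases h with ⟨-, ℓ, h, hb, -, rfl, hN⟩ | ⟨-, ℓ, h, hb, -, h0, hN⟩
  · obtain ⟨-, -, -, -, hle⟩ := hb 0 (Nat.zero_le _)
    rw [Nat.sub_self] at hN
    omega
  · obtain ⟨-, -, -, -, hle⟩ := hb 0 (Nat.zero_le _)
    rw [Nat.sub_self] at hN
    omega

theorem ChunkEquiv.cutPath_eq (hγ : IsCutFamily σ γ) (hn : 1 ≤ n) (hnn : n ≤ n')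
    (h : ChunkEquiv σ γ (g, q, i, n) (g', q', i', n')) : cutPath γ n i (n' - n) = some i' := by
  obtain ⟨hxy, hyx⟩ := h
  rcases hnn.eq_or_lt with rfl | hlt
  · rw [Nat.sub_self, le_antisymm hxy.index_le hyx.index_le]
    rfl
  rcases hxy with ⟨-, ℓ, h, hb, hup, rfl, rfl⟩ | ⟨hle, -⟩
  swap; · omega
  rcases hyx with ⟨hle, -⟩ | ⟨-, ℓ', h', hb', hup', h0, hN⟩
  · omega
  have hcuts : ∀ k < n' - n, PartialStrictMono (γ (n + k)) := fun k hk => by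
    obtain ⟨sl, hsl, -⟩ := hb (k + 1) hk
    exact hγ.partialStrictMono (by omega) (List.getElem?_eq_some_iff.mp hsl).1
  refine cutPath_eq_of_zigzag hcuts (fun k hk => ?_) (fun k hk => ?_) hup hup' h0 hN.symm
  · obtain ⟨-, -, -, -, hle⟩ := hb k hk
    exact hle
  · obtain ⟨-, -, -, -, hle⟩ := hb' k hk
    exact hle

theorem chunkEquiv_of_cutPath (hγ : IsCutFamily σ γ) (hx : ChunkAt σ n i g q) (hn : 1 ≤ n)
    (hnn : n ≤ n') (hlen : n' ≤ σ.length) (hp : cutPath γ n i (n' - n) = some i') :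
    ChunkEquiv σ γ (g, q, i, n) (g', q', i', n') := by
  set c : ℕ → ℕ := fun k => (cutPath γ n i k).getD 0
  have hc : ∀ k ≤ n' - n, cutPath γ n i k = some (c k) := by
    intro k hk
    obtain ⟨d, hd⟩ := Nat.exists_eq_add_of_le hk
    obtain ⟨j, hj, -⟩ := cutPath_add_eq_some (hd ▸ hp)
    simp only [c, hj, Option.getD_some]
  have hbound : ∀ k ≤ n' - n, ∃ sl, σ[n + k - 1]? = some sl ∧
      c k < sl.length ∧ c k < sl.length ∧ c k ≤ c k := by
    intro k hk
    obtain ⟨sl, hlt, hsl, -⟩ := hx.of_cutPath hγ hn (by omega) (hc k hk)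
    exact ⟨sl, hsl, hlt, hlt, le_rfl⟩
  have hstep : ∀ k < n' - n, γ (n + k) (c k) = some (c (k + 1)) := by
    intro k hk
    have := hc (k + 1) hk
    rwa [cutPath, hc k hk.le, Option.bind_some] at this
  have hend : c (n' - n) = i' := Option.some.inj ((hc _ le_rfl).symm.trans hp)
  exact ⟨Or.inl ⟨hnn, c, c, hbound, hstep, rfl, hend⟩,
    Or.inr ⟨hnn, c, c, hbound, hstep, rfl, hend⟩⟩

theorem IsSliceSeq.offset_mem (hσ : IsSliceSeq sim G u σ) (h : ChunkAt σ m k g r) :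
    1 ≤ r ∧ r ≤ g.length := by
  obtain ⟨sl, hk, hsl, hget⟩ := h
  have hm : m - 1 < u.length := hσ.1 ▸ (List.getElem?_eq_some_iff.mp hsl).1
  obtain ⟨-, hr, hrg, -⟩ :=
    hσ.2.1 _ sl _ hsl (List.getElem?_eq_getElem hm) _ (List.get_mem sl ⟨k, hk⟩)
  rw [hget] at hr hrg
  exact ⟨hr, hrg⟩

/-- Below the last offset of its guide a chunk is not in the end slice, so the cut moves it up. -/
theorem IsSliceSeq.exists_cut_up (hσ : IsSliceSeq sim G u σ) (hγ : IsCutFamily σ γ)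
    (h : ChunkAt σ m k g r) (hm : 1 ≤ m) (hr : r < g.length) :
    m < σ.length ∧ ∃ k', γ m k = some k' := by
  obtain ⟨sl, hk, hsl, hget⟩ := h
  have hmem := List.get_mem sl ⟨k, hk⟩
  have hlt : m < σ.length := by
    have hm1 := (List.getElem?_eq_some_iff.mp hsl).1
    refine lt_of_le_of_ne (by omega) fun he => ?_
    have := hσ.2.2.2.2 sl (by rwa [← he]) _ hmem
    rw [hget] at this
    exact hr.ne this
  refine ⟨hlt, Option.ne_none_iff_exists'.mp fun hnone => hr.ne ?_⟩
  have := (hγ.isCut hm hsl (List.getElem?_eq_getElem hlt)).2.2.2.1 k hk hnone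
  rwa [hget] at this

/-- Above the first offset of its guide a chunk is not in the start slice, so it is reached by
a cut from below. -/
theorem IsSliceSeq.exists_cut_down (hσ : IsSliceSeq sim G u σ) (hγ : IsCutFamily σ γ)
    (h : ChunkAt σ m k g r) (hm : 1 ≤ m) (hr : 2 ≤ r) :
    2 ≤ m ∧ ∃ k', γ (m - 1) k' = some k ∧ ChunkAt σ (m - 1) k' g (r - 1) := by
  obtain ⟨sl, hk, hsl, hget⟩ := h
  have hmem := List.get_mem sl ⟨k, hk⟩
  have hm2 : 2 ≤ m := by
    by_contra hlt
    obtain rfl : m = 1 := by omega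
    have := hσ.2.2.2.1 sl hsl _ hmem
    rw [hget] at this
    omega
  have hlen : m - 2 < σ.length := by
    have := (List.getElem?_eq_some_iff.mp hsl).1
    omega
  have hsl' : σ[m - 1 - 1]? = some σ[m - 2] := List.getElem?_eq_getElem hlen
  have hc := hγ.isCut (m := m - 1) (by omega) hsl' hsl
  obtain ⟨k', hk'⟩ : ∃ k', γ (m - 1) k' = some k := by
    by_contra! hne
    have := hc.2.2.2.2 k hk hne
    rw [hget] at this
    omega
  have hk'l := (hc.1 k' k hk').1
  have hiff := (hc.2.2.1 k' hk'l k hk).mp hk'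
  rw [hget] at hiff
  exact ⟨hm2, k', hk', _, hk'l, hsl', Prod.ext hiff.1 (by simp only at hiff ⊢; omega)⟩

theorem IsSliceSeq.exists_cutPath_up (hσ : IsSliceSeq sim G u σ) (hγ : IsCutFamily σ γ)
    (h : ChunkAt σ m k g r) (hm : 1 ≤ m) (hN : r + N ≤ g.length) :
    ∃ k', cutPath γ m k N = some k' ∧ ChunkAt σ (m + N) k' g (r + N) := by
  induction N with
  | zero => exact ⟨k, rfl, h⟩
  | succ N ih =>
    obtain ⟨j, hj, hjc⟩ := ih (by omega)
    obtain ⟨hlen, k', hk'⟩ := hσ.exists_cut_up hγ hjc (by omega) (by omega)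
    refine ⟨k', ?_, hjc.of_cut hγ (m := m + N) (by omega) hlen hk'⟩
    rw [cutPath, hj, Option.bind_some]
    exact hk'

theorem IsSliceSeq.exists_cutPath_from_start (hσ : IsSliceSeq sim G u σ)
    (hγ : IsCutFamily σ γ) (h : ChunkAt σ n i g q) (hn : 1 ≤ n) :
    ∃ p i₁, n = p + q ∧ ChunkAt σ (p + 1) i₁ g 1 ∧ cutPath γ (p + 1) i₁ (q - 1) = some i := by
  induction q generalizing n i with
  | zero => exact absurd (hσ.offset_mem h).1 (by omega)
  | succ q ih =>
    rcases Nat.eq_zero_or_pos q with rfl | hq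
    · exact ⟨n - 1, i, by omega, by rwa [Nat.sub_add_cancel hn], rfl⟩
    obtain ⟨hn2, k, hk, hkc⟩ := hσ.exists_cut_down hγ h hn (by omega)
    obtain ⟨p, i₁, hp, hi₁, hpath⟩ := ih hkc (by omega)
    refine ⟨p, i₁, by omega, hi₁, ?_⟩
    rw [show q + 1 - 1 = q - 1 + 1 by omega, cutPath, hpath, Option.bind_some]
    rwa [show p + 1 + (q - 1) = n - 1 by omega]

theorem ChunkEquiv.symm {x y : List α × ℕ × ℕ × ℕ} (h : ChunkEquiv σ γ x y) :
    ChunkEquiv σ γ y x :=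
  ⟨h.2, h.1⟩

theorem chunkEquiv_iff_cutPath_from_start (hσ : IsSliceSeq sim G u σ) (hγ : IsCutFamily σ γ)
    {p i₁ : ℕ} (hx : ChunkAt σ (p + q) i g q) (hq : 1 ≤ q)
    (hpath : cutPath γ (p + 1) i₁ (q - 1) = some i)
    (hy : ChunkAt σ n' i' g' q') (hn' : 1 ≤ n') :
    ChunkEquiv σ γ (g, q, i, p + q) (g', q', i', n') ↔
      p < n' ∧ cutPath γ (p + 1) i₁ (n' - (p + 1)) = some i' := by
  have hxlen := hx.lt_length
  have hylen := hy.lt_length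
  constructor
  · intro h
    rcases le_total (p + q) n' with hle | hle
    · have hxy := h.cutPath_eq hγ (by omega) hle
      refine ⟨by omega, ?_⟩
      rwa [show n' - (p + 1) = (q - 1) + (n' - (p + q)) by omega, cutPath_add_of_eq_some hpath,
        show p + 1 + (q - 1) = p + q by omega]
    · have hyx := h.symm.cutPath_eq hγ hn' hle
      have hx' := hy.of_cutPath hγ hn' (by omega) hyx
      rw [show n' + (p + q - n') = p + q by omega] at hx'
      obtain ⟨-, hqq⟩ := hx.unique hx'
      have hq' := (hσ.offset_mem hy).1
      rw [show q - 1 = (n' - (p + 1)) + (p + q - n') by omega] at hpath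
      obtain ⟨k, hk, hki⟩ := cutPath_add_eq_some hpath
      rw [show p + 1 + (n' - (p + 1)) = n' by omega] at hki
      obtain rfl := cutPath_inj hγ hn' (by omega) hki hyx
      exact ⟨by omega, hk⟩
  · rintro ⟨hlt, hp⟩
    rcases le_total (p + q) n' with hle | hle
    · rw [show n' - (p + 1) = (q - 1) + (n' - (p + q)) by omega, cutPath_add_of_eq_some hpath,
        show p + 1 + (q - 1) = p + q by omega] at hp
      exact chunkEquiv_of_cutPath hγ hx (by omega) hle (by omega) hp
    · rw [show q - 1 = (n' - (p + 1)) + (p + q - n') by omega, cutPath_add_of_eq_some hp,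
        show p + 1 + (n' - (p + 1)) = n' by omega] at hpath
      exact (chunkEquiv_of_cutPath hγ hy hn' hle (by omega) hpath).symm

end Chunks

theorem chunk_equivalence_class_form_general
    {α : Type} (sim : α → α → Prop)
    (G : Set (List α)) (u : List α)
    (σ : List (List (List α × ℕ))) (hσ : IsSliceSeq sim G u σ)
    (γ : ℕ → ℕ → Option ℕ)
    (hγ : ∀ (n : ℕ) (sl sl' : List (List α × ℕ)),
      σ[n]? = some sl → σ[n + 1]? = some sl' → IsCut sl sl' (γ (n + 1)))
    (g : List α) (q i n : ℕ) (hx : (g, q, i, n) ∈ Chunks σ) :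
    ∃ j : ℕ → ℕ,
      (∀ s, 1 ≤ s → s ≤ g.length →
        ∃ sl, σ[(n - q) + s - 1]? = some sl ∧ j s < sl.length) ∧
      {y | y ∈ Chunks σ ∧ ChunkEquiv σ γ (g, q, i, n) y} =
        {y | ∃ s, 1 ≤ s ∧ s ≤ g.length ∧ y = (g, s, j s, (n - q) + s)} := by
  obtain ⟨hn, hx⟩ := mem_chunks_iff.mp hx
  obtain ⟨p, i₁, rfl, hx₁, hpath⟩ := hσ.exists_cutPath_from_start hγ hx hn
  have hq := (hσ.offset_mem hx).1
  have hup : ∀ s, 1 ≤ s → s ≤ g.length →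
      ∃ k, cutPath γ (p + 1) i₁ (s - 1) = some k ∧ ChunkAt σ (p + s) k g s := by
    intro s hs hsg
    obtain ⟨k, hk, hkc⟩ := hσ.exists_cutPath_up hγ hx₁ (N := s - 1) (by omega) (by omega)
    rw [show p + 1 + (s - 1) = p + s by omega, show 1 + (s - 1) = s by omega] at hkc
    exact ⟨k, hk, hkc⟩
  refine ⟨fun s => (cutPath γ (p + 1) i₁ (s - 1)).getD 0, fun s hs hsg => ?_, ?_⟩
  · obtain ⟨k, hk, sl, hlt, hsl, -⟩ := hup s hs hsg
    rw [Nat.add_sub_cancel]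
    exact ⟨sl, hsl, by simpa only [hk, Option.getD_some] using hlt⟩
  ext ⟨g', q', i', n'⟩
  simp only [Set.mem_ofPred_eq, mem_chunks_iff, Nat.add_sub_cancel, Prod.mk.injEq]
  constructor
  · rintro ⟨⟨hn', hy⟩, hxy⟩
    obtain ⟨hlt, hk⟩ := (chunkEquiv_iff_cutPath_from_start hσ hγ hx hq hpath hy hn').mp hxy
    have hy' := hx₁.of_cutPath hγ (by omega) (by have := hy.lt_length; omega) hk
    rw [show p + 1 + (n' - (p + 1)) = n' by omega] at hy'
    obtain ⟨rfl, rfl⟩ := hy'.unique hy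
    refine ⟨1 + (n' - (p + 1)), by omega, (hσ.offset_mem hy).2, rfl, rfl, ?_, by omega⟩
    rw [show 1 + (n' - (p + 1)) - 1 = n' - (p + 1) by omega, hk, Option.getD_some]
  · rintro ⟨s, hs, hsg, rfl, rfl, rfl, rfl⟩
    obtain ⟨k, hk, hkc⟩ := hup q' hs hsg
    rw [hk, Option.getD_some]
    refine ⟨⟨by omega, hkc⟩, (chunkEquiv_iff_cutPath_from_start hσ hγ hx hq hpath hkc
      (by omega)).mpr ⟨by omega, ?_⟩⟩
    rwa [show p + q' - (p + 1) = q' - 1 by omega]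

/-- Let `x = (g, q, i, n)` be a chunk of a slice sequence `σ`
and put `p = n - q`.  Then there are indexes `j_1 ∈ I_{p+1}, …, j_{|g|} ∈
I_{p+|g|}` such that the equivalence class of `x` is exactly
`[x] = { (g, s, j_s, p + s) | 1 ≤ s ≤ |g| }`. -/
theorem chunk_equivalence_class_form
    {α : Type} [Fintype α] (sim : α → α → Prop) (hsim : Equivalence sim)
    (G : Set (List α)) (hG : G.Finite) (u : List α)
    (σ : List (List (List α × ℕ))) (hσ : IsSliceSeq sim G u σ)
    (γ : ℕ → ℕ → Option ℕ)
    (hγ : ∀ (n : ℕ) (sl sl' : List (List α × ℕ)),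
      σ[n]? = some sl → σ[n + 1]? = some sl' → IsCut sl sl' (γ (n + 1)))
    (g : List α) (q i n : ℕ) (hx : (g, q, i, n) ∈ Chunks σ) :
    ∃ j : ℕ → ℕ,
      (∀ s, 1 ≤ s → s ≤ g.length →
        ∃ sl, σ[(n - q) + s - 1]? = some sl ∧ j s < sl.length) ∧
      {y | y ∈ Chunks σ ∧ ChunkEquiv σ γ (g, q, i, n) y} =
        {y | ∃ s, 1 ≤ s ∧ s ≤ g.length ∧ y = (g, s, j s, (n - q) + s)} :=
  chunk_equivalence_class_form_general sim G u σ hσ γ hγ g q i n hx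
end

section
/- For any two slices sl and sl', there is at most one monotone partial injection γ from the index set of sl to the index set of sl' satisfying the cut conditions: γ(i) = j iff g_i = g'_j and q_i + 1 = q'_j; i ∉ dom(γ) implies q_i = |g_i|; and j ∉ rng(γ) implies q'_j = 1. -/
/-- For any two slices `sl` (for a symbol `a`) and `sl'`
(for a symbol `a'`) there is at most one monotone partial injection `γ`
satisfying the cut conditions: the cut, if it exists, is unique. -/
theorem cut_unique
    {α : Type} [Fintype α] (sim : α → α → Prop) (hsim : Equivalence sim)
    (G : Set (List α)) (hG : G.Finite)
    (sl sl' : List (List α × ℕ)) (a a' : α)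
    (hsl : IsSlice sim G sl a) (hsl' : IsSlice sim G sl' a')
    (γ γ' : ℕ → Option ℕ) (hγ : IsCut sl sl' γ) (hγ' : IsCut sl sl' γ') :
    γ = γ' := by
  obtain ⟨hb, _, hiff, _, _⟩ := hγ
  obtain ⟨hb', _, hiff', _, _⟩ := hγ'
  funext i
  rcases h : γ i with _ | j
  · rcases h' : γ' i with _ | j'
    · rfl
    · obtain ⟨hi, hj⟩ := hb' i j' h'
      have := (hiff i hi j' hj).mpr ((hiff' i hi j' hj).mp h')
      rw [h] at this; exact absurd this (by simp)
  · obtain ⟨hi, hj⟩ := hb i j h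
    exact ((hiff' i hi j hj).mpr ((hiff i hi j hj).mp h)).symm
end
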